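/- arXiv:2404.13301 — 9 statements merged into one kernel-verified Lean document; each statement's English description precedes it below -/
import Mathlib

section
/- Let A be an n×n real symmetric matrix with smallest eigenvalue d₁. A unit vector x ∈ ℝⁿ is a global minimizer of x ↦ xᵀAx − 2⟨x,b⟩ over the unit sphere if and only if there exists λ ∈ ℝ such that A − λI is positive semidefinite and (A − λI)x = b. -/
open Matrix

lemma quad_aux (c0 c1 c2 : ℝ) (h : ∀ ε : ℝ, ε ≠ 0 → 0 ≤ c0 + c1*ε + c2*ε^2) : 0 ≤ c0 := by
  by_contra h0
  push_neg at h0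
  have hden : (0:ℝ) < |c1| + |c2| + 1 := by positivity
  set ε : ℝ := min 1 ((-c0)/(|c1| + |c2| + 1)) with hε
  have hε0 : 0 < ε := lt_min one_pos (div_pos (by linarith) hden)
  have hε1 : ε ≤ 1 := min_le_left _ _
  have hε2 : ε * (|c1| + |c2| + 1) ≤ -c0 := by
    have := min_le_right 1 ((-c0)/(|c1| + |c2| + 1))
    rw [le_div_iff₀ hden] at this
    exact this
  have h1 := h ε (ne_of_gt hε0)
  have hc1 : c1 * ε ≤ |c1| * ε :=
    mul_le_mul_of_nonneg_right (le_abs_self c1) hε0.le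
  have hsq : ε^2 ≤ ε := by nlinarith
  have hc2 : c2 * ε^2 ≤ |c2| * ε := by
    calc c2 * ε^2 ≤ |c2| * ε^2 := mul_le_mul_of_nonneg_right (le_abs_self c2) (sq_nonneg ε)
    _ ≤ |c2| * ε := mul_le_mul_of_nonneg_left hsq (abs_nonneg c2)
  have hexp : ε * (|c1| + |c2| + 1) = |c1| *ε + |c2| *ε + ε := by ring
  linarith

lemma cubic_aux (c0 c1 c2 c3 : ℝ) (h : ∀ t : ℝ, 0 ≤ c0 + c1*t + c2*t^2 + c3*t^3) : 0 ≤ c3 := by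
  by_contra h0
  push_neg at h0
  have hc3 : (0:ℝ) < -c3 := by linarith
  set S : ℝ := |c0| + |c1| + |c2| with hS
  have hS0 : 0 ≤ S := by positivity
  set t : ℝ := S/(-c3) + 1 with ht
  have ht1 : (1:ℝ) ≤ t := by
    have h5 : 0 ≤ S/(-c3) := div_nonneg hS0 hc3.le
    rw [ht]; linarith
  have htpos : 0 < t := by linarith
  have ht3 : (-c3) * t = S + (-c3) := by
    rw [ht]; field_simp
    have hc : c3 * (S / c3) = S := by field_simp [show c3 ≠ 0 by linarith]
    linear_combination hc
  have h1 := h t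
  have ht2 : (1:ℝ) ≤ t^2 := by nlinarith
  have b0 : c0 ≤ |c0| * t^2 := by
    have hh : 0 ≤ |c0| * (t^2 - 1) := mul_nonneg (abs_nonneg c0) (by linarith)
    nlinarith [le_abs_self c0]
  have b1 : c1 * t ≤ |c1| * t^2 := by
    have h1' : c1 * t ≤ |c1| * t := mul_le_mul_of_nonneg_right (le_abs_self c1) htpos.le
    have hh : 0 ≤ |c1| * t * (t - 1) :=
      mul_nonneg (mul_nonneg (abs_nonneg c1) htpos.le) (by linarith)
    nlinarith [hh, h1']
  have b2 : c2 * t^2 ≤ |c2| * t^2 := mul_le_mul_of_nonneg_right (le_abs_self c2) (sq_nonneg t)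
  have hcube : c3 * t^3 = -(S + (-c3)) * t^2 := by
    have : c3 * t^3 = -((-c3)*t) * t^2 := by ring
    rw [this, ht3]
  have hexp : S * t^2 = |c0| *t^2 + |c1| *t^2 + |c2| *t^2 := by rw [hS]; ring
  have hneg : c3 * t^2 < 0 := mul_neg_of_neg_of_pos h0 (by nlinarith)
  linarith

/-- A unit vector `x` is a global minimizer of `x ↦ xᵀAx − 2⟨x,b⟩` over the
unit sphere iff there is `λ` with `A − λI ⪰ 0` and `(A − λI)x = b`. -/
theorem stmt0 {n : ℕ} (A : Matrix (Fin n) (Fin n) ℝ) (hA : A.IsSymm)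
    (b x : Fin n → ℝ) (hx : x ⬝ᵥ x = 1) :
    (∀ y : Fin n → ℝ, y ⬝ᵥ y = 1 →
        x ⬝ᵥ A.mulVec x - 2 * (x ⬝ᵥ b) ≤ y ⬝ᵥ A.mulVec y - 2 * (y ⬝ᵥ b)) ↔
      ∃ lam : ℝ, (A - lam • (1 : Matrix (Fin n) (Fin n) ℝ)).PosSemidef ∧
        (A - lam • (1 : Matrix (Fin n) (Fin n) ℝ)).mulVec x = b := by
  have hs : ∀ u v : Fin n → ℝ, u ⬝ᵥ A.mulVec v = v ⬝ᵥ A.mulVec u := by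
    intro u v
    rw [dotProduct_mulVec, ← mulVec_transpose, hA.eq, dotProduct_comm]
  constructor
  · intro h
    set r : Fin n → ℝ := A.mulVec x - b with hrdef
    -- Key inequality from reflections
    have Key : ∀ u : Fin n → ℝ,
        0 ≤ (u ⬝ᵥ x)^2 * (u ⬝ᵥ A.mulVec u) - (u ⬝ᵥ u) * ((u ⬝ᵥ x) * (u ⬝ᵥ r)) := by
      intro u
      by_cases hu : u = 0
      · simp [hu]
      have hnn : 0 ≤ u ⬝ᵥ u := by simpa using dotProduct_self_star_nonneg u
      have hq : 0 < u ⬝ᵥ u := by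
        rcases lt_or_eq_of_le hnn with h' | h'
        · exact h'
        · exact absurd (dotProduct_self_eq_zero.mp h'.symm) hu
      set q : ℝ := u ⬝ᵥ u with hqdef
      set c : ℝ := u ⬝ᵥ x with hcdef
      have hxu : x ⬝ᵥ u = c := by rw [hcdef]; exact dotProduct_comm x u
      set s : ℝ := 2 * c / q with hsdef
      have hy1 : (x - s • u) ⬝ᵥ (x - s • u) = 1 := by
        simp only [dotProduct_sub, sub_dotProduct, dotProduct_smul, smul_dotProduct,
          smul_eq_mul, hx, hxu, hcdef, ← hqdef]
        rw [hsdef]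
        field_simp
        ring
      have h1 := h _ hy1
      have hAy : (x - s • u) ⬝ᵥ A.mulVec (x - s • u) =
          x ⬝ᵥ A.mulVec x - 2*s*(u ⬝ᵥ A.mulVec x) + s^2 * (u ⬝ᵥ A.mulVec u) := by
        simp only [mulVec_sub, mulVec_smul, dotProduct_sub, sub_dotProduct,
          dotProduct_smul, smul_dotProduct, smul_eq_mul, hs u x]
        ring
      have hyb : (x - s • u) ⬝ᵥ b = x ⬝ᵥ b - s * (u ⬝ᵥ b) := by
        simp only [sub_dotProduct, smul_dotProduct, smul_eq_mul]
      rw [hAy, hyb] at h1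
      have hur : u ⬝ᵥ r = u ⬝ᵥ A.mulVec x - u ⬝ᵥ b := by
        rw [hrdef, dotProduct_sub]
      have h2 : 0 ≤ s^2 * (u ⬝ᵥ A.mulVec u) - 2*s*(u ⬝ᵥ r) := by
        rw [hur]; nlinarith [h1]
      have h3 : (q^2/4) * (s^2 * (u ⬝ᵥ A.mulVec u) - 2*s*(u ⬝ᵥ r)) =
          c^2 * (u ⬝ᵥ A.mulVec u) - q * (c * (u ⬝ᵥ r)) := by
        rw [hsdef]
        field_simp
        ring
      nlinarith [mul_nonneg (by positivity : (0:ℝ) ≤ q^2/4) h2, h3]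
    -- first order condition
    set lam : ℝ := x ⬝ᵥ r with hlam
    have hw : r = lam • x := by
      set w : Fin n → ℝ := r - lam • x with hwdef
      have hwx : w ⬝ᵥ x = 0 := by
        rw [hwdef]
        simp only [sub_dotProduct, smul_dotProduct, smul_eq_mul, hx]
        rw [dotProduct_comm r x, ← hlam]
        ring
      have hxw : x ⬝ᵥ w = 0 := by rw [dotProduct_comm]; exact hwx
      have hq0 : w ⬝ᵥ w = 0 := by
        have hωq : w ⬝ᵥ r = w ⬝ᵥ w := by
          have hr' : r = w + lam • x := by rw [hwdef]; abel
          rw [hr']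
          simp only [dotProduct_add, dotProduct_smul, smul_eq_mul, hwx]
          ring
        have hcub : ∀ t : ℝ, 0 ≤ (x ⬝ᵥ A.mulVec x - lam)
            + (2*(w ⬝ᵥ A.mulVec x) - (w ⬝ᵥ w))*t
            + ((w ⬝ᵥ A.mulVec w) - lam*(w ⬝ᵥ w))*t^2
            + (-((w ⬝ᵥ w)*(w ⬝ᵥ w)))*t^3 := by
          intro t
          have K := Key (x + t • w)
          have e1 : (x + t • w) ⬝ᵥ x = 1 := by
            simp only [add_dotProduct, smul_dotProduct, smul_eq_mul, hx, hwx]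
            ring
          have e2 : (x + t • w) ⬝ᵥ (x + t • w) = 1 + t^2 * (w ⬝ᵥ w) := by
            simp only [dotProduct_add, add_dotProduct, dotProduct_smul, smul_dotProduct,
              smul_eq_mul, hx, hwx, hxw]
            ring
          have e3 : (x + t • w) ⬝ᵥ A.mulVec (x + t • w) =
              x ⬝ᵥ A.mulVec x + 2*(w ⬝ᵥ A.mulVec x)*t + (w ⬝ᵥ A.mulVec w)*t^2 := by
            simp only [mulVec_add, mulVec_smul, dotProduct_add, add_dotProduct,
              dotProduct_smul, smul_dotProduct, smul_eq_mul, hs w x]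
            ring
          have e4 : (x + t • w) ⬝ᵥ r = lam + (w ⬝ᵥ w) * t := by
            simp only [add_dotProduct, smul_dotProduct, smul_eq_mul, ← hlam, hωq]
            ring
          rw [e1, e2, e3, e4] at K
          nlinarith [K]
        have hc3 := cubic_aux _ _ _ _ hcub
        nlinarith [mul_self_nonneg (w ⬝ᵥ w)]
      have hw0 : w = 0 := dotProduct_self_eq_zero.mp hq0
      rw [hwdef] at hw0
      exact sub_eq_zero.mp hw0
    -- conclude
    have Key2 : ∀ u : Fin n → ℝ,
        0 ≤ (u ⬝ᵥ x)^2 * (u ⬝ᵥ A.mulVec u - lam * (u ⬝ᵥ u)) := by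
      intro u
      have K := Key u
      have hur : u ⬝ᵥ r = lam * (u ⬝ᵥ x) := by
        rw [hw, dotProduct_smul, smul_eq_mul]
      rw [hur] at K
      nlinarith [K]
    have hMx : (A - lam • (1 : Matrix (Fin n) (Fin n) ℝ)).mulVec x = b := by
      rw [sub_mulVec, smul_mulVec, one_mulVec]
      have : A.mulVec x - b = lam • x := by rw [← hrdef, hw]
      have h4 := congrArg (fun v => A.mulVec x - v) this
      rw [← h4]
      abel
    refine ⟨lam, posSemidef_iff_dotProduct_mulVec.mpr ⟨?_, ?_⟩, hMx⟩
    · show (A - lam • (1 : Matrix (Fin n) (Fin n) ℝ))ᴴ = _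
      rw [conjTranspose_eq_transpose_of_trivial, transpose_sub, transpose_smul,
        transpose_one, hA.eq]
    · intro z
      simp only [star_trivial, sub_mulVec, smul_mulVec, one_mulVec,
        dotProduct_sub, dotProduct_smul, smul_eq_mul]
      by_cases hzx : z ⬝ᵥ x = 0
      · have hq := quad_aux (z ⬝ᵥ A.mulVec z - lam * (z ⬝ᵥ z))
          (2*(z ⬝ᵥ A.mulVec x)) (x ⬝ᵥ A.mulVec x - lam) ?_
        · linarith
        intro ε hε
        have K := Key2 (z + ε • x)
        have e1 : (z + ε • x) ⬝ᵥ x = ε := by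
          simp only [add_dotProduct, smul_dotProduct, smul_eq_mul, hzx, hx]
          ring
        have hxz : x ⬝ᵥ z = 0 := by rw [dotProduct_comm]; exact hzx
        have e2 : (z + ε • x) ⬝ᵥ (z + ε • x) = z ⬝ᵥ z + ε^2 := by
          simp only [dotProduct_add, add_dotProduct, dotProduct_smul, smul_dotProduct,
            smul_eq_mul, hx, hzx, hxz]
          ring
        have e3 : (z + ε • x) ⬝ᵥ A.mulVec (z + ε • x) =
            z ⬝ᵥ A.mulVec z + 2*(z ⬝ᵥ A.mulVec x)*ε + (x ⬝ᵥ A.mulVec x)*ε^2 := by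
          simp only [mulVec_add, mulVec_smul, dotProduct_add, add_dotProduct,
            dotProduct_smul, smul_dotProduct, smul_eq_mul, hs x z]
          ring
        rw [e1, e2, e3] at K
        have hε2 : 0 < ε^2 := by positivity
        nlinarith [K]
      · have K := Key2 z
        have hsq : 0 < (z ⬝ᵥ x)^2 := by positivity
        nlinarith [K]
  · rintro ⟨lam, hM, hMx⟩ y hy
    have h2 := (posSemidef_iff_dotProduct_mulVec.mp hM).2 (y - x)
    simp only [star_trivial] at h2
    have expand : (y - x) ⬝ᵥ (A - lam • (1 : Matrix (Fin n) (Fin n) ℝ)).mulVec (y - x) =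
        y ⬝ᵥ A.mulVec y - 2 * (y ⬝ᵥ A.mulVec x) + x ⬝ᵥ A.mulVec x
          - lam * (y ⬝ᵥ y) + 2 * lam * (y ⬝ᵥ x) - lam * (x ⬝ᵥ x) := by
      simp only [sub_mulVec, mulVec_sub, smul_mulVec, one_mulVec,
        dotProduct_sub, sub_dotProduct, dotProduct_smul, smul_dotProduct,
        smul_eq_mul, hs y x, dotProduct_comm x y]
      ring
    have hb : b = A.mulVec x - lam • x := by
      rw [← hMx, sub_mulVec, smul_mulVec, one_mulVec]
    have hyb : y ⬝ᵥ b = y ⬝ᵥ A.mulVec x - lam * (y ⬝ᵥ x) := by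
      rw [hb]
      simp only [dotProduct_sub, dotProduct_smul, smul_eq_mul]
    have hxb : x ⬝ᵥ b = x ⬝ᵥ A.mulVec x - lam := by
      rw [hb]
      simp [dotProduct_sub, dotProduct_smul, smul_eq_mul, hx]
    rw [expand, hx, hy] at h2
    rw [hyb, hxb]
    linarith
end

section
/- Let X ∈ St(n,r) be a local minimizer of f(X) = ½ tr(XᵀAXC) − tr(BᵀX) with multiplier Λ = Xᵀ(AXC − B). Let X⊥ complete X to an orthonormal basis of ℝⁿ, let d⊥_min be the smallest eigenvalue of X⊥ᵀ A X⊥, and let γ₁,…,γ_r be the eigenvalues of ΛC⁻¹. Then d⊥_min ≥ max(γ₁,…,γ_r). -/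
open Matrix

set_option linter.unusedSectionVars false

section Stmt5Aux
variable {ι κ ρ : Type*} [Fintype ι] [Fintype κ] [Fintype ρ]

lemma stmt5_mul_vecMulVec (M : Matrix ι κ ℝ) (a : κ → ℝ) (b : ρ → ℝ) :
    M * vecMulVec a b = vecMulVec (M.mulVec a) b := by
  ext i j
  simp [mul_apply, vecMulVec_apply, mulVec, dotProduct, Finset.sum_mul, mul_assoc]

lemma stmt5_vecMulVec_mul_vecMulVec (a : ι → ℝ) (b c : κ → ℝ) (d : ρ → ℝ) :
    vecMulVec a b * vecMulVec c d = (b ⬝ᵥ c) • vecMulVec a d := by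
  ext i j
  simp [mul_apply, vecMulVec_apply, dotProduct, Finset.mul_sum, Finset.sum_mul]
  ring_nf
  exact Finset.sum_congr rfl fun x _ => by ring

lemma stmt5_vecMulVec_transpose (a : ι → ℝ) (b : κ → ℝ) :
    (vecMulVec a b)ᵀ = vecMulVec b a := by
  ext i j; simp [vecMulVec_apply, mul_comm]

lemma stmt5_trace_vecMulVec_mul (a : ι → ℝ) (b : κ → ℝ) (M : Matrix κ ι ℝ) :
    (vecMulVec a b * M).trace = b ⬝ᵥ M.mulVec a := by
  simp [trace, Matrix.diag, mul_apply, vecMulVec_apply, dotProduct, mulVec,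
    Finset.mul_sum]
  rw [Finset.sum_comm]
  exact Finset.sum_congr rfl fun x _ => Finset.sum_congr rfl fun y _ => by ring

lemma stmt5_vecMulVec_mulVec (a : ι → ℝ) (b : κ → ℝ) (v : κ → ℝ) :
    (vecMulVec a b).mulVec v = (b ⬝ᵥ v) • a := by
  ext i
  simp [mulVec, vecMulVec_apply, dotProduct, Finset.sum_mul]
  exact Finset.sum_congr rfl fun x _ => by ring

lemma stmt5_dot_symm_eq (M : Matrix ι ι ℝ) (a : ι → ℝ) :
    a ⬝ᵥ Mᵀ.mulVec a = a ⬝ᵥ M.mulVec a := by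
  rw [dotProduct_mulVec, vecMul_transpose, dotProduct_comm]

lemma stmt5_dot_self_pos {a : ι → ℝ} (ha : a ≠ 0) : 0 < a ⬝ᵥ a := by
  refine lt_of_le_of_ne ?_ (fun h => ha (dotProduct_self_eq_zero.mp h.symm))
  exact Finset.sum_nonneg fun i _ => mul_self_nonneg _

lemma stmt5_scalar_iden (b d e z h t : ℝ) (ht : (1:ℝ) + t^2 ≠ 0) :
    ((-2*t^2/(1+t^2)) * b + (2*t/(1+t^2)) * d + (-2*t^2/(1+t^2))^2 * e
        + ((-2*t^2/(1+t^2)) * (2*t/(1+t^2))) * z + (2*t/(1+t^2))^2 * h)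
      + ((-2*(-t)^2/(1+(-t)^2)) * b + (2*(-t)/(1+(-t)^2)) * d + (-2*(-t)^2/(1+(-t)^2))^2 * e
        + ((-2*(-t)^2/(1+(-t)^2)) * (2*(-t)/(1+(-t)^2))) * z + (2*(-t)/(1+(-t)^2))^2 * h)
      = ((8*h - 4*b) + (8*e - 4*b)*t^2) * (t^2/(1+t^2)^2) := by
  have h2 : (-t)^2 = t^2 := by ring
  rw [h2]
  field_simp
  ring

end Stmt5Aux

set_option maxHeartbeats 1000000 in
/-- at a local minimizer `X ∈ St(n,r)` of `f(X) = ½ tr(XᵀAXC) − tr(BᵀX)` with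
multiplier `Λ = Xᵀ(AXC − B)`, if `X⊥` completes `X` to an orthonormal basis of `ℝⁿ`,
`d⊥_min` is the smallest eigenvalue of `X⊥ᵀAX⊥`, and `γ` is any eigenvalue of `ΛC⁻¹`,
then `d⊥_min ≥ γ`. -/
theorem stmt5 {n r m : ℕ} (A : Matrix (Fin n) (Fin n) ℝ) (hA : A.IsSymm)
    (B : Matrix (Fin n) (Fin r) ℝ)
    (C : Matrix (Fin r) (Fin r) ℝ) (hC : C.PosDef)
    (X : Matrix (Fin n) (Fin r) ℝ) (hX : Xᵀ * X = 1)
    (hmin : IsLocalMinOn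
      (fun Y : Matrix (Fin n) (Fin r) ℝ =>
        (1 / 2 : ℝ) * (Yᵀ * A * Y * C).trace - (Bᵀ * Y).trace)
      {Y : Matrix (Fin n) (Fin r) ℝ | Yᵀ * Y = 1} X)
    (Xp : Matrix (Fin n) (Fin m) ℝ)
    (hQ : (fromCols X Xp)ᵀ * fromCols X Xp = 1)
    (hQ' : fromCols X Xp * (fromCols X Xp)ᵀ = 1)
    (dmin : ℝ)
    (hdmin : (Xpᵀ * A * Xp - dmin • (1 : Matrix (Fin m) (Fin m) ℝ)).PosSemidef)
    (hdmin' : ∃ u : Fin m → ℝ, u ≠ 0 ∧ (Xpᵀ * A * Xp).mulVec u = dmin • u) :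
    ∀ (γ : ℝ) (u : Fin r → ℝ), u ≠ 0 →
      ((Xᵀ * (A * X * C - B)) * C⁻¹).mulVec u = γ • u → γ ≤ dmin := by
  intro γ u hu hγu
  classical
  -- symmetry facts
  have hAs : Aᵀ = A := hA
  have hCs : Cᵀ = C := by
    have := hC.1
    simpa [Matrix.IsHermitian, Matrix.conjTranspose_eq_transpose_of_trivial] using this
  -- block identities
  have hblocks : fromBlocks (Xᵀ*X) (Xᵀ*Xp) (Xpᵀ*X) (Xpᵀ*Xp)
      = fromBlocks (1 : Matrix (Fin r) (Fin r) ℝ) 0 0 (1 : Matrix (Fin m) (Fin m) ℝ) := by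
    rw [← fromRows_mul_fromCols, ← transpose_fromCols, hQ, fromBlocks_one]
  have hXXp : Xᵀ * Xp = 0 := by
    have := congrArg Matrix.toBlocks₁₂ hblocks
    simpa [Matrix.toBlocks_fromBlocks₁₂, -Matrix.fromBlocks_one] using this
  have hXpXp : Xpᵀ * Xp = 1 := by
    have := congrArg Matrix.toBlocks₂₂ hblocks
    simpa [Matrix.toBlocks_fromBlocks₂₂, -Matrix.fromBlocks_one] using this
  have hXpX : Xpᵀ * X = 0 := by
    have := congrArg Matrix.transpose hXXp
    simpa [Matrix.transpose_mul] using this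
  -- unnormalized eigenvector w0 of Λ relative to C
  have hCdet : IsUnit C.det := isUnit_iff_ne_zero.2 hC.det_pos.ne'
  set Λ : Matrix (Fin r) (Fin r) ℝ := Xᵀ * (A * X * C - B) with hΛdef
  clear_value Λ
  set w0 : Fin r → ℝ := C⁻¹.mulVec u with hw0def
  clear_value w0
  have hCw0 : C.mulVec w0 = u := by
    rw [hw0def, mulVec_mulVec, Matrix.mul_nonsing_inv _ hCdet, one_mulVec]
  have hw0ne : w0 ≠ 0 := by
    intro h
    apply hu
    rw [← hCw0, h, mulVec_zero]
  have hΛw0 : Λ.mulVec w0 = γ • C.mulVec w0 := by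
    rw [hCw0, hw0def, mulVec_mulVec]
    exact hγu
  -- normalized w
  set cw : ℝ := Real.sqrt (w0 ⬝ᵥ w0) with hcwdef
  clear_value cw
  have hcwpos : 0 < cw := by
    rw [hcwdef]; exact Real.sqrt_pos.2 (stmt5_dot_self_pos hw0ne)
  set w : Fin r → ℝ := cw⁻¹ • w0 with hwdef
  clear_value w
  have hwne : w ≠ 0 := by
    rw [hwdef]; exact smul_ne_zero (inv_ne_zero hcwpos.ne') hw0ne
  have hww : w ⬝ᵥ w = 1 := by
    have h2 : cw * cw = w0 ⬝ᵥ w0 := by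
      rw [hcwdef]; exact Real.mul_self_sqrt (stmt5_dot_self_pos hw0ne).le
    rw [hwdef, smul_dotProduct, dotProduct_smul, smul_eq_mul, smul_eq_mul, ← h2]
    field_simp
  have hΛw : Λ.mulVec w = γ • C.mulVec w := by
    rw [hwdef, mulVec_smul, mulVec_smul, hΛw0, smul_comm]
  -- normalized z
  obtain ⟨z0, hz0ne, hz0⟩ := hdmin'
  set D : Matrix (Fin m) (Fin m) ℝ := Xpᵀ * A * Xp with hDdef
  clear_value D
  set cz : ℝ := Real.sqrt (z0 ⬝ᵥ z0) with hczdef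
  clear_value cz
  have hczpos : 0 < cz := by
    rw [hczdef]; exact Real.sqrt_pos.2 (stmt5_dot_self_pos hz0ne)
  set z : Fin m → ℝ := cz⁻¹ • z0 with hzdef
  clear_value z
  have hzz : z ⬝ᵥ z = 1 := by
    have h2 : cz * cz = z0 ⬝ᵥ z0 := by
      rw [hczdef]; exact Real.mul_self_sqrt (stmt5_dot_self_pos hz0ne).le
    rw [hzdef, smul_dotProduct, dotProduct_smul, smul_eq_mul, smul_eq_mul, ← h2]
    field_simp
  have hDz : D.mulVec z = dmin • z := by
    rw [hzdef, mulVec_smul, hz0, smul_comm]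
  -- rank one matrices
  set U : Matrix (Fin r) (Fin r) ℝ := vecMulVec w w with hUdef
  set Z : Matrix (Fin m) (Fin r) ℝ := vecMulVec z w with hZdef
  have hUT : Uᵀ = U := by rw [hUdef, stmt5_vecMulVec_transpose]
  have hUU : U * U = U := by rw [hUdef, stmt5_vecMulVec_mul_vecMulVec, hww, one_smul]
  have hZZ : Zᵀ * Z = U := by
    rw [hZdef, stmt5_vecMulVec_transpose, stmt5_vecMulVec_mul_vecMulVec, hzz, one_smul, hUdef]
  clear_value U Z
  -- curve parameters
  set p : ℝ → ℝ := fun t => -2*t^2/(1+t^2) with hpdef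
  set q : ℝ → ℝ := fun t => 2*t/(1+t^2) with hqdef
  clear_value p q
  have hden : ∀ t : ℝ, (1:ℝ)+t^2 ≠ 0 := fun t => by positivity
  have hpq : ∀ t, 2*(p t) + (p t)^2 + (q t)^2 = 0 := by
    intro t
    have h := hden t
    simp only [hpdef, hqdef]
    field_simp
    ring
  set Y : ℝ → Matrix (Fin n) (Fin r) ℝ := fun t => X + p t • (X*U) + q t • (Xp*Z) with hYdef
  clear_value Y
  -- product identities
  have k5 : Xᵀ * (X * U) = U := by rw [← Matrix.mul_assoc, hX, Matrix.one_mul]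
  have k6 : Xᵀ * (Xp * Z) = 0 := by rw [← Matrix.mul_assoc, hXXp, Matrix.zero_mul]
  have k7 : (X*U)ᵀ * X = U := by
    rw [transpose_mul, Matrix.mul_assoc, hX, Matrix.mul_one, hUT]
  have k8 : (Xp*Z)ᵀ * X = 0 := by
    rw [transpose_mul, Matrix.mul_assoc, hXpX, Matrix.mul_zero]
  have l1 : Xpᵀ * (X * U) = 0 := by rw [← Matrix.mul_assoc, hXpX, Matrix.zero_mul]
  have l2 : Xpᵀ * (Xp * Z) = Z := by rw [← Matrix.mul_assoc, hXpXp, Matrix.one_mul]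
  have k1 : (X*U)ᵀ * (X*U) = U := by
    rw [transpose_mul, Matrix.mul_assoc, k5, hUT, hUU]
  have k2 : (X*U)ᵀ * (Xp*Z) = 0 := by
    rw [transpose_mul, Matrix.mul_assoc, k6, Matrix.mul_zero]
  have k3 : (Xp*Z)ᵀ * (X*U) = 0 := by
    rw [transpose_mul, Matrix.mul_assoc, l1, Matrix.mul_zero]
  have k4 : (Xp*Z)ᵀ * (Xp*Z) = U := by
    rw [transpose_mul, Matrix.mul_assoc, l2, hZZ]
  -- the curve stays on the Stiefel manifold
  have hYS : ∀ t, (Y t)ᵀ * (Y t) = 1 := by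
    intro t
    have expand : (Y t)ᵀ * (Y t) = 1 + (2*(p t) + (p t)^2 + (q t)^2) • U := by
      rw [hYdef]
      simp only [transpose_add, transpose_smul, Matrix.add_mul, Matrix.mul_add,
        Matrix.smul_mul, Matrix.mul_smul, smul_smul, hX, k1, k2, k3, k4, k5, k6, k7, k8,
        smul_zero, add_zero, zero_add]
      module
    rw [expand, hpq, zero_smul, add_zero]
  -- expansion coefficients
  obtain ⟨β, hβdef⟩ : ∃ b : ℝ, b = (1/2)*(((X*U)ᵀ*A*X*C).trace + (Xᵀ*A*(X*U)*C).trace)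
      - (Bᵀ*(X*U)).trace := ⟨_, rfl⟩
  obtain ⟨δ, hδdef⟩ : ∃ b : ℝ, b = (1/2)*(((Xp*Z)ᵀ*A*X*C).trace + (Xᵀ*A*(Xp*Z)*C).trace)
      - (Bᵀ*(Xp*Z)).trace := ⟨_, rfl⟩
  obtain ⟨ε, hεdef⟩ : ∃ b : ℝ, b = (1/2)*(((X*U)ᵀ*A*(X*U)*C).trace) := ⟨_, rfl⟩
  obtain ⟨ζ, hζdef⟩ : ∃ b : ℝ, b = (1/2)*(((X*U)ᵀ*A*(Xp*Z)*C).trace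
      + ((Xp*Z)ᵀ*A*(X*U)*C).trace) := ⟨_, rfl⟩
  obtain ⟨η, hηdef⟩ : ∃ b : ℝ, b = (1/2)*(((Xp*Z)ᵀ*A*(Xp*Z)*C).trace) := ⟨_, rfl⟩
  have key : ∀ t, (1/2 : ℝ) * ((Y t)ᵀ * A * (Y t) * C).trace - (Bᵀ * (Y t)).trace
      = ((1/2 : ℝ) * (Xᵀ * A * X * C).trace - (Bᵀ * X).trace)
        + p t * β + q t * δ + (p t)^2 * ε + (p t * q t) * ζ + (q t)^2 * η := by
    intro t
    rw [hYdef, hβdef, hδdef, hεdef, hζdef, hηdef]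
    simp only [transpose_add, transpose_smul, Matrix.add_mul, Matrix.mul_add,
      Matrix.smul_mul, Matrix.mul_smul, smul_smul, trace_add, trace_smul, smul_eq_mul]
    ring
  -- value of β
  have hβ1 : ((X*U)ᵀ*A*X*C).trace = w ⬝ᵥ ((Xᵀ*(A*(X*C))).mulVec w) := by
    have e : (X*U)ᵀ*A*X*C = U * (Xᵀ*(A*(X*C))) := by
      rw [transpose_mul, hUT]
      simp only [Matrix.mul_assoc]
    rw [e, hUdef, stmt5_trace_vecMulVec_mul]
  have hβ2 : (Xᵀ*A*(X*U)*C).trace = w ⬝ᵥ ((Xᵀ*(A*(X*C))).mulVec w) := by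
    have e : Xᵀ*A*(X*U)*C = (Xᵀ*(A*X)) * (U*C) := by
      simp only [Matrix.mul_assoc]
    rw [e, trace_mul_comm]
    have e2 : U*C*(Xᵀ*(A*X)) = U * (C*(Xᵀ*(A*X))) := by simp only [Matrix.mul_assoc]
    rw [e2, hUdef, stmt5_trace_vecMulVec_mul]
    have e3 : C*(Xᵀ*(A*X)) = (Xᵀ*(A*(X*C)))ᵀ := by
      simp only [transpose_mul, hAs, hCs, transpose_transpose, Matrix.mul_assoc]
    rw [e3, stmt5_dot_symm_eq]
  have hβ3 : (Bᵀ*(X*U)).trace = w ⬝ᵥ ((Xᵀ*B).mulVec w) := by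
    have e : Bᵀ*(X*U) = (Bᵀ*X) * U := by simp only [Matrix.mul_assoc]
    rw [e, trace_mul_comm, hUdef, stmt5_trace_vecMulVec_mul]
    have e2 : Bᵀ*X = (Xᵀ*B)ᵀ := by simp only [transpose_mul, transpose_transpose]
    rw [e2, stmt5_dot_symm_eq]
  have hβval : β = γ * (w ⬝ᵥ C.mulVec w) := by
    rw [hβdef, hβ1, hβ2, hβ3]
    have eΛ : Λ.mulVec w = (Xᵀ*(A*(X*C))).mulVec w - (Xᵀ*B).mulVec w := by
      rw [hΛdef, Matrix.mul_sub, Matrix.sub_mulVec]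
      simp only [Matrix.mul_assoc]
    have h9 : w ⬝ᵥ (Xᵀ*(A*(X*C))).mulVec w - w ⬝ᵥ (Xᵀ*B).mulVec w
        = γ * (w ⬝ᵥ C.mulVec w) := by
      rw [← dotProduct_sub, ← eΛ, hΛw, dotProduct_smul, smul_eq_mul]
    linarith [h9]
  -- value of η
  have hηval : η = (1/2) * (dmin * (w ⬝ᵥ C.mulVec w)) := by
    rw [hηdef]
    have e : (Xp*Z)ᵀ*A*(Xp*Z)*C = Zᵀ * (Xpᵀ*(A*(Xp*(Z*C)))) := by
      rw [transpose_mul]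
      simp only [Matrix.mul_assoc]
    rw [e, show Zᵀ = vecMulVec w z from by rw [hZdef, stmt5_vecMulVec_transpose],
      stmt5_trace_vecMulVec_mul]
    have e2 : (Xpᵀ*(A*(Xp*(Z*C)))).mulVec w = (w ⬝ᵥ C.mulVec w) • (dmin • z) := by
      rw [← mulVec_mulVec, ← mulVec_mulVec, ← mulVec_mulVec, ← mulVec_mulVec]
      rw [hZdef, stmt5_vecMulVec_mulVec]
      rw [mulVec_smul, mulVec_smul, mulVec_smul]
      congr 1
      rw [mulVec_mulVec, mulVec_mulVec, ← hDdef]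
      exact hDz
    rw [e2, dotProduct_smul, dotProduct_smul, smul_eq_mul, smul_eq_mul, hzz]
    ring
  -- local minimality along the curve
  have hpc : Continuous p := by
    rw [hpdef]
    exact Continuous.div (by fun_prop) (by fun_prop) hden
  have hqc : Continuous q := by
    rw [hqdef]
    exact Continuous.div (by fun_prop) (by fun_prop) hden
  have hYc : Continuous Y := by
    rw [hYdef]
    exact (continuous_const.add ((hpc.smul continuous_const))).add (hqc.smul continuous_const)
  have hY0 : Y 0 = X := by
    simp only [hYdef, hpdef, hqdef]
    norm_num
  have htend : Filter.Tendsto Y (nhds 0)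
      (nhdsWithin X {Y : Matrix (Fin n) (Fin r) ℝ | Yᵀ * Y = 1}) := by
    rw [tendsto_nhdsWithin_iff]
    constructor
    · simpa [hY0] using hYc.tendsto 0
    · exact Filter.Eventually.of_forall hYS
  have hev : ∀ᶠ t in nhds (0:ℝ),
      (1/2 : ℝ) * (Xᵀ * A * X * C).trace - (Bᵀ * X).trace
        ≤ (1/2 : ℝ) * ((Y t)ᵀ * A * (Y t) * C).trace - (Bᵀ * (Y t)).trace :=
    htend.eventually hmin
  have hh : ∀ᶠ t in nhds (0:ℝ),
      0 ≤ p t * β + q t * δ + (p t)^2 * ε + (p t * q t) * ζ + (q t)^2 * η := by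
    filter_upwards [hev] with t ht
    rw [key t] at ht
    linarith
  have hneg : Filter.Tendsto (fun t : ℝ => -t) (nhds 0) (nhds (0:ℝ)) := by
    simpa using (continuous_neg.tendsto (0:ℝ))
  have hh' : ∀ᶠ t in nhds (0:ℝ),
      0 ≤ p (-t) * β + q (-t) * δ + (p (-t))^2 * ε + (p (-t) * q (-t)) * ζ + (q (-t))^2 * η :=
    hneg.eventually hh
  have hG : ∀ᶠ t in nhdsWithin (0:ℝ) {(0:ℝ)}ᶜ,
      0 ≤ (8*η - 4*β) + (8*ε - 4*β)*t^2 := by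
    have hmem : ∀ᶠ t in nhdsWithin (0:ℝ) {(0:ℝ)}ᶜ, t ∈ ({(0:ℝ)}ᶜ : Set ℝ) :=
      eventually_mem_nhdsWithin
    filter_upwards [(hh.and hh').filter_mono nhdsWithin_le_nhds, hmem] with t ht htne'
    have htne : t ≠ 0 := htne'
    obtain ⟨h1, h2⟩ := ht
    have hiden : (p t * β + q t * δ + (p t)^2 * ε + (p t * q t) * ζ + (q t)^2 * η)
        + (p (-t) * β + q (-t) * δ + (p (-t))^2 * ε + (p (-t) * q (-t)) * ζ + (q (-t))^2 * η)
        = ((8*η - 4*β) + (8*ε - 4*β)*t^2) * (t^2/(1+t^2)^2) := by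
      simp only [hpdef, hqdef]
      exact stmt5_scalar_iden β δ ε ζ η t (hden t)
    have hpos : (0:ℝ) < t^2/(1+t^2)^2 :=
      div_pos (sq_pos_of_ne_zero htne) (by positivity)
    have hsum : 0 ≤ ((8*η - 4*β) + (8*ε - 4*β)*t^2) * (t^2/(1+t^2)^2) := by
      rw [← hiden]; linarith
    by_contra hcon
    push_neg at hcon
    have hneg2 := mul_neg_of_neg_of_pos hcon hpos
    linarith
  have hM : 0 ≤ 8*η - 4*β := by
    have htt : Filter.Tendsto (fun t : ℝ => (8*η - 4*β) + (8*ε - 4*β)*t^2)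
        (nhdsWithin (0:ℝ) {(0:ℝ)}ᶜ) (nhds (8*η - 4*β)) := by
      have h0 := (Continuous.tendsto (by fun_prop :
        Continuous (fun t : ℝ => (8*η - 4*β) + (8*ε - 4*β)*t^2)) 0)
      simpa using h0.mono_left nhdsWithin_le_nhds
    exact ge_of_tendsto htt hG
  -- conclude
  have hCw : 0 < w ⬝ᵥ C.mulVec w := by
    have h10 := hC.dotProduct_mulVec_pos hwne
    simpa using h10
  rw [hβval, hηval] at hM
  by_contra hcon
  push_neg at hcon
  have h11 : 0 < (γ - dmin) * (w ⬝ᵥ C.mulVec w) := mul_pos (by linarith) hCw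
  linarith
end

section
/- Let X ∈ St(n,r) be a global minimizer of f(X) = ½ tr(XᵀAXC) − tr(BᵀX) with multiplier Λ = Xᵀ(AXC − B). If d_r denotes the r-th smallest eigenvalue of A, then Λ ⪯ d_r C. -/
set_option linter.unusedSectionVars false
set_option maxHeartbeats 1000000


open Matrix
variable {l m p : Type*} [Fintype l] [Fintype m] [Fintype p]

lemma vmv_mul (a : l → ℝ) (b : m → ℝ) (M : Matrix m p ℝ) :
    vecMulVec a b * M = vecMulVec a (Mᵀ *ᵥ b) := by
  ext i j
  simp only [mul_apply, vecMulVec_apply, mulVec, dotProduct, transpose_apply, Finset.mul_sum]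
  exact Finset.sum_congr rfl fun k _ => by ring

lemma mul_vmv (M : Matrix l m ℝ) (a : m → ℝ) (b : p → ℝ) :
    M * vecMulVec a b = vecMulVec (M *ᵥ a) b := by
  ext i j
  simp only [mul_apply, vecMulVec_apply, mulVec, dotProduct, Finset.sum_mul]
  exact Finset.sum_congr rfl fun k _ => by ring

lemma vmv_mul_vmv (a : l → ℝ) (b : m → ℝ) (u : m → ℝ) (d : p → ℝ) :
    vecMulVec a b * vecMulVec u d = (b ⬝ᵥ u) • vecMulVec a d := by
  ext i j
  simp only [mul_apply, vecMulVec_apply, Matrix.smul_apply, dotProduct, Finset.sum_mul, smul_eq_mul]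
  exact Finset.sum_congr rfl fun k _ => by ring

lemma trace_vmv (a : m → ℝ) (b : m → ℝ) : (vecMulVec a b).trace = a ⬝ᵥ b := by
  simp [trace, vecMulVec_apply, dotProduct, diag]

lemma trace_vmv_mul (z : m → ℝ) (v : l → ℝ) (M : Matrix l m ℝ) :
    (vecMulVec z v * M).trace = v ⬝ᵥ (M *ᵥ z) := by
  rw [vmv_mul, trace_vmv]
  simp only [dotProduct, mulVec, transpose_apply, Finset.mul_sum]
  rw [Finset.sum_comm]
  exact Finset.sum_congr rfl fun k _ => Finset.sum_congr rfl fun i _ => by ring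

variable {N R : ℕ}

/-- expansion of the objective at a rank-one perturbation -/

lemma mulVec_dot (M : Matrix l m ℝ) (v : m → ℝ) (u : l → ℝ) :
    (M *ᵥ v) ⬝ᵥ u = v ⬝ᵥ (Mᵀ *ᵥ u) := by
  rw [dotProduct_comm, dotProduct_mulVec, ← mulVec_transpose, dotProduct_comm]

lemma vmv_transpose (v : l → ℝ) (z : m → ℝ) : (vecMulVec v z)ᵀ = vecMulVec z v := by
  ext i j; simp [vecMulVec_apply, transpose_apply, mul_comm]

variable {N R : ℕ}

/-- expansion of the objective at a rank-one perturbation -/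
lemma EL (A : Matrix (Fin N) (Fin N) ℝ) (hA : Aᵀ = A)
    (B : Matrix (Fin N) (Fin R) ℝ) (C : Matrix (Fin R) (Fin R) ℝ) (hCs : Cᵀ = C)
    (X : Matrix (Fin N) (Fin R) ℝ) (v : Fin N → ℝ) (z : Fin R → ℝ) :
    (1 / 2 : ℝ) * (((X + vecMulVec v z)ᵀ * A * (X + vecMulVec v z) * C).trace)
      - (Bᵀ * (X + vecMulVec v z)).trace
    = ((1 / 2 : ℝ) * ((Xᵀ * A * X * C).trace) - (Bᵀ * X).trace)
      + v ⬝ᵥ ((A * X * C - B) *ᵥ z)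
      + (1 / 2 : ℝ) * (v ⬝ᵥ (A *ᵥ v)) * (z ⬝ᵥ (C *ᵥ z)) := by
  have e1 : (X + vecMulVec v z)ᵀ * A * (X + vecMulVec v z) * C
      = Xᵀ * A * X * C + (vecMulVec z v) * (A * X * C) + Xᵀ * A * (vecMulVec v z) * C
        + (vecMulVec z v) * A * (vecMulVec v z) * C := by
    rw [transpose_add, vmv_transpose]
    simp only [Matrix.add_mul, Matrix.mul_add, Matrix.mul_assoc]
    abel
  have t1 : ((vecMulVec z v) * (A * X * C)).trace = v ⬝ᵥ ((A * X * C) *ᵥ z) :=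
    trace_vmv_mul _ _ _
  have t2 : (Xᵀ * A * (vecMulVec v z) * C).trace = v ⬝ᵥ ((A * X * C) *ᵥ z) := by
    rw [mul_vmv (Xᵀ * A) v z, vmv_mul, trace_vmv, mulVec_dot, transpose_mul, hCs,
      ← Matrix.mulVec_mulVec, ← Matrix.mulVec_mulVec, hA, transpose_transpose,
      Matrix.mulVec_mulVec]
  have t3 : ((vecMulVec z v) * A * (vecMulVec v z) * C).trace
      = (v ⬝ᵥ (A *ᵥ v)) * (z ⬝ᵥ (C *ᵥ z)) := by
    rw [vmv_mul z v A, vmv_mul_vmv, Matrix.smul_mul, vmv_mul, trace_smul, trace_vmv, hA,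
      smul_eq_mul, hCs, dotProduct_comm]
  have t4 : (Bᵀ * (vecMulVec v z)).trace = v ⬝ᵥ (B *ᵥ z) := by
    rw [mul_vmv, trace_vmv, mulVec_dot, transpose_transpose]
  rw [e1, Matrix.mul_add, trace_add, trace_add, trace_add, t1, t2, t3, trace_add, t4, Matrix.sub_mulVec,
    dotProduct_sub]
  ring
open Filter Topology

lemma polyA {a b c e : ℝ} (h : ∀ t : ℝ, 0 ≤ a*t + b*t^2 + c*t^3 + e*t^4) : a = 0 := by
  have hd : HasDerivAt (fun t : ℝ => a*t + b*t^2 + c*t^3 + e*t^4) a 0 := by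
    have := (((hasDerivAt_id (0:ℝ)).const_mul a).add
      ((((hasDerivAt_pow 2 (0:ℝ)).const_mul b).add
        (((hasDerivAt_pow 3 (0:ℝ)).const_mul c).add ((hasDerivAt_pow 4 (0:ℝ)).const_mul e)))))
    simp only [← add_assoc] at this
    simp at this
    exact this
  have hmin : IsLocalMin (fun t : ℝ => a*t + b*t^2 + c*t^3 + e*t^4) 0 := by
    apply IsMinOn.isLocalMin (s := Set.univ)
    · intro t _; simpa using h t
    · simp
  have := hmin.deriv_eq_zero
  rw [hd.deriv] at this
  simpa using this

lemma quartic_to_quad {b c e : ℝ} (h : ∀ t : ℝ, 0 ≤ b*t^2 + c*t^3 + e*t^4) :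
    ∀ t : ℝ, 0 ≤ b + c*t + e*t^2 := by
  intro t
  rcases eq_or_ne t 0 with rfl | ht
  · -- b ≥ 0 via limit over punctured nbhd
    have hev : ∀ s ∈ ({(0:ℝ)}ᶜ : Set ℝ), 0 ≤ b + c*s + e*s^2 := by
      intro s hs
      have hs0 : s ≠ 0 := hs
      have := h s
      have hs2 : 0 < s^2 := by positivity
      nlinarith [this]
    have htend : Tendsto (fun s : ℝ => b + c*s + e*s^2) (𝓝[≠] 0) (𝓝 b) := by
      have : Tendsto (fun s : ℝ => b + c*s + e*s^2) (𝓝 0) (𝓝 (b + c*0 + e*0^2)) := by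
        apply Continuous.tendsto; continuity
      simpa using this.mono_left nhdsWithin_le_nhds
    have : 0 ≤ b :=
      ge_of_tendsto htend (by
        filter_upwards [self_mem_nhdsWithin] with s hs using hev s hs)
    simpa using this
  · have := h t
    have ht2 : 0 < t^2 := by positivity
    nlinarith [this]

lemma quad_e {b c e : ℝ} (h : ∀ t : ℝ, 0 ≤ b + c*t + e*t^2) : 0 ≤ e := by
  have htend : Tendsto (fun s : ℝ => b/s^2 + c/s + e) atTop (𝓝 e) := by
    have h1 : Tendsto (fun s : ℝ => b/s^2) atTop (𝓝 0) := by
      apply Tendsto.div_atTop tendsto_const_nhds; exact tendsto_pow_atTop (by norm_num)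
    have h2 : Tendsto (fun s : ℝ => c/s) atTop (𝓝 0) :=
      Tendsto.div_atTop tendsto_const_nhds tendsto_id
    simpa using (h1.add h2).add tendsto_const_nhds
  refine ge_of_tendsto htend ?_
  filter_upwards [eventually_gt_atTop (0:ℝ)] with s hs
  have := h s
  have : 0 ≤ (b + c*s + e*s^2)/s^2 := div_nonneg this (by positivity)
  calc (0:ℝ) ≤ (b + c*s + e*s^2)/s^2 := this
    _ = b/s^2 + c/s + e := by field_simp

lemma quad_form {b c e : ℝ} (h : ∀ t : ℝ, 0 ≤ b + c*t + e*t^2) (p q : ℝ) :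
    0 ≤ b*q^2 + c*(p*q) + e*p^2 := by
  rcases eq_or_ne q 0 with rfl | hq
  · have := quad_e h
    nlinarith
  · have := h (p/q)
    have hq2 : 0 < q^2 := by positivity
    have : 0 ≤ (b + c*(p/q) + e*(p/q)^2) * q^2 := by positivity
    calc (0:ℝ) ≤ (b + c*(p/q) + e*(p/q)^2) * q^2 := this
      _ = b*q^2 + c*(p*q) + e*p^2 := by field_simp

section more
open Matrix
variable {l m p : Type*} [Fintype l] [Fintype m] [Fintype p]

lemma vmv_smul_left (t : ℝ) (a : l → ℝ) (b : m → ℝ) :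
    vecMulVec (t • a) b = t • vecMulVec a b := by
  ext i j; simp [vecMulVec_apply, mul_assoc]

lemma vmv_smul_right (t : ℝ) (a : l → ℝ) (b : m → ℝ) :
    vecMulVec a (t • b) = t • vecMulVec a b := by
  ext i j; simp [vecMulVec_apply]; ring

lemma vmv_add_left (a a' : l → ℝ) (b : m → ℝ) :
    vecMulVec (a + a') b = vecMulVec a b + vecMulVec a' b := by
  ext i j; simp [vecMulVec_apply]; ring

lemma vmv_add_right (a : l → ℝ) (b b' : m → ℝ) :
    vecMulVec a (b + b') = vecMulVec a b + vecMulVec a b' := by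
  ext i j; simp [vecMulVec_apply]; ring

lemma vmv_mulVec (a : l → ℝ) (b : m → ℝ) (u : m → ℝ) :
    vecMulVec a b *ᵥ u = (b ⬝ᵥ u) • a := by
  ext i; simp [mulVec, vecMulVec_apply, dotProduct, Finset.sum_mul, Finset.mul_sum]
  exact Finset.sum_congr rfl fun k _ => by ring

end more

section feas
open Matrix
variable {N R : ℕ}

lemma feasGen (X : Matrix (Fin N) (Fin R) ℝ) (hX : Xᵀ * X = 1) (z : Fin R → ℝ)
    (v : Fin N → ℝ) (κ : ℝ) (hv : Xᵀ *ᵥ v = κ • z) (hvv : v ⬝ᵥ v = -(κ + κ)) :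
    (X + vecMulVec v z)ᵀ * (X + vecMulVec v z) = 1 := by
  rw [transpose_add, vmv_transpose, Matrix.add_mul, Matrix.mul_add, Matrix.mul_add, hX,
    mul_vmv, hv, vmv_mul, hv, vmv_mul_vmv, hvv, vmv_smul_left, vmv_smul_right]
  module

end feas

section eig
open Matrix
variable {N R : ℕ}

lemma exists_dir (hr0 : 0 < R) (hrn : R ≤ N)
    (V : Matrix (Fin N) (Fin N) ℝ) (d : Fin N → ℝ) (hd : Monotone d) (hV : Vᵀ * V = 1)
    (X : Matrix (Fin N) (Fin R) ℝ) (z : Fin R → ℝ) (hz : z ⬝ᵥ z = 1) :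
    ∃ (u : Fin N → ℝ) (κ : ℝ), u ⬝ᵥ u = 1 ∧ Xᵀ *ᵥ u = κ • z ∧
      u ⬝ᵥ ((V * Matrix.diagonal d * Vᵀ) *ᵥ u) ≤ d ⟨R - 1, by have := hr0; omega⟩ := by
  set W : Matrix (Fin N) (Fin R) ℝ := V.submatrix id (Fin.castLE hrn) with hW
  have hVent : ∀ (a b : Fin N), (∑ k, V k a * V k b) = if a = b then (1:ℝ) else 0 := by
    intro a b
    have h := congrFun (congrFun hV a) b
    simpa [mul_apply, transpose_apply, one_apply] using h
  have hWW : Wᵀ * W = 1 := by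
    ext i j
    simp only [mul_apply, transpose_apply, hW, submatrix_apply, id_eq, one_apply]
    rw [hVent]
    simp [Fin.castLE_inj]
  have hJ : Vᵀ * W = (1 : Matrix (Fin N) (Fin N) ℝ).submatrix id (Fin.castLE hrn) := by
    ext i j
    simp only [mul_apply, transpose_apply, hW, submatrix_apply, id_eq, one_apply]
    rw [hVent]
  have hVJ : V * (1 : Matrix (Fin N) (Fin N) ℝ).submatrix id (Fin.castLE hrn) = W := by
    ext i j
    simp [mul_apply, submatrix_apply, one_apply, hW]
  have hDJ : Matrix.diagonal d * (1 : Matrix (Fin N) (Fin N) ℝ).submatrix id (Fin.castLE hrn)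
      = (1 : Matrix (Fin N) (Fin N) ℝ).submatrix id (Fin.castLE hrn)
        * Matrix.diagonal (fun j => d (Fin.castLE hrn j)) := by
    ext i j
    simp only [mul_apply, submatrix_apply, id_eq, diagonal_apply, one_apply]
    rw [Finset.sum_eq_single j (fun b _ hb => by simp [hb]) (by simp)]
    by_cases h : i = Fin.castLE hrn j <;> simp [h]
  have hAW : (V * Matrix.diagonal d * Vᵀ) * W
      = W * Matrix.diagonal (fun j => d (Fin.castLE hrn j)) := by
    calc (V * Matrix.diagonal d * Vᵀ) * W = V * (Matrix.diagonal d * (Vᵀ * W)) := by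
          rw [Matrix.mul_assoc, Matrix.mul_assoc]
      _ = V * ((1 : Matrix (Fin N) (Fin N) ℝ).submatrix id (Fin.castLE hrn)
            * Matrix.diagonal (fun j => d (Fin.castLE hrn j))) := by rw [hJ, hDJ]
      _ = W * Matrix.diagonal (fun j => d (Fin.castLE hrn j)) := by
          rw [← Matrix.mul_assoc, hVJ]
  -- quadratic form bound on range of W
  have hWdot : ∀ y : Fin R → ℝ, (W *ᵥ y) ⬝ᵥ (W *ᵥ y) = y ⬝ᵥ y := by
    intro y
    rw [mulVec_dot, Matrix.mulVec_mulVec, hWW, one_mulVec]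
  have hquad : ∀ y : Fin R → ℝ,
      (W *ᵥ y) ⬝ᵥ ((V * Matrix.diagonal d * Vᵀ) *ᵥ (W *ᵥ y))
        ≤ d ⟨R - 1, by omega⟩ * (y ⬝ᵥ y) := by
    intro y
    have e1 : (V * Matrix.diagonal d * Vᵀ) *ᵥ (W *ᵥ y)
        = W *ᵥ ((Matrix.diagonal fun j => d (Fin.castLE hrn j)) *ᵥ y) := by
      rw [Matrix.mulVec_mulVec, hAW, ← Matrix.mulVec_mulVec]
    rw [e1, mulVec_dot, Matrix.mulVec_mulVec, hWW, one_mulVec]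
    have e2 : ∀ i : Fin R, ((Matrix.diagonal fun j => d (Fin.castLE hrn j)) *ᵥ y) i
        = d (Fin.castLE hrn i) * y i := by
      intro i; simp [mulVec_diagonal]
    rw [dotProduct]
    simp only [e2]
    rw [dotProduct, Finset.mul_sum]
    refine Finset.sum_le_sum fun i _ => ?_
    have hle : d (Fin.castLE hrn i) ≤ d ⟨R - 1, by omega⟩ := by
      apply hd
      simp only [Fin.le_def, Fin.coe_castLE]
      omega
    nlinarith [sq_nonneg (y i), hle, mul_self_nonneg (y i)]
  -- a nonzero kernel element
  set P : Matrix (Fin R) (Fin R) ℝ := 1 - vecMulVec z z with hP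
  set M : Matrix (Fin R) (Fin R) ℝ := P * (Xᵀ * W) with hM
  have hMv : ∀ y : Fin R → ℝ, M *ᵥ y
      = (Xᵀ * W) *ᵥ y - (z ⬝ᵥ ((Xᵀ * W) *ᵥ y)) • z := by
    intro y
    rw [hM, ← Matrix.mulVec_mulVec, hP, Matrix.sub_mulVec, Matrix.one_mulVec, vmv_mulVec]
  have hzM : ∀ y : Fin R → ℝ, z ⬝ᵥ (M *ᵥ y) = 0 := by
    intro y
    rw [hMv, dotProduct_sub, dotProduct_smul, hz]
    simp
  have hker : ∃ y : Fin R → ℝ, y ≠ 0 ∧ M *ᵥ y = 0 := by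
    have hnosurj : ¬ Function.Surjective M.mulVecLin := by
      intro hs
      obtain ⟨y, hy⟩ := hs z
      have h0 := hzM y
      rw [show M *ᵥ y = M.mulVecLin y from rfl, hy, hz] at h0
      norm_num at h0
    have hnoinj : ¬ Function.Injective M.mulVecLin := by
      intro hi
      exact hnosurj ((LinearMap.injective_iff_surjective (f := M.mulVecLin)).mp hi)
    rw [Function.not_injective_iff] at hnoinj
    obtain ⟨y₁, y₂, hfy, hy⟩ := hnoinj
    refine ⟨y₁ - y₂, sub_ne_zero.mpr hy, ?_⟩
    have : M.mulVecLin (y₁ - y₂) = 0 := by rw [map_sub, hfy, sub_self]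
    simpa using this
  obtain ⟨y, hy0, hMy⟩ := hker
  have hXWy : (Xᵀ * W) *ᵥ y = (z ⬝ᵥ ((Xᵀ * W) *ᵥ y)) • z := by
    have := hMv y
    rw [hMy] at this
    exact sub_eq_zero.mp this.symm
  have hyy : 0 < y ⬝ᵥ y := by
    rcases lt_or_eq_of_le (Finset.sum_nonneg fun i _ => mul_self_nonneg (y i) :
        (0:ℝ) ≤ y ⬝ᵥ y) with h | h
    · exact h
    · exact absurd (dotProduct_self_eq_zero.mp h.symm) hy0
  set ρ : ℝ := Real.sqrt (y ⬝ᵥ y) with hρdef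
  have hρ : 0 < ρ := Real.sqrt_pos.mpr hyy
  have hρ2 : ρ * ρ = y ⬝ᵥ y := Real.mul_self_sqrt hyy.le
  refine ⟨ρ⁻¹ • (W *ᵥ y), ρ⁻¹ * (z ⬝ᵥ ((Xᵀ * W) *ᵥ y)), ?_, ?_, ?_⟩
  · rw [smul_dotProduct, dotProduct_smul, hWdot, smul_eq_mul, smul_eq_mul, ← hρ2]
    field_simp
  · rw [Matrix.mulVec_smul, Matrix.mulVec_mulVec, hXWy, smul_smul, dotProduct_smul, hz,
      smul_eq_mul, mul_one]
  · rw [Matrix.mulVec_smul, smul_dotProduct, dotProduct_smul, smul_eq_mul, smul_eq_mul]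
    have h1 := hquad y
    have h2 : ρ⁻¹ * (ρ⁻¹ * (W *ᵥ y ⬝ᵥ (V * Matrix.diagonal d * Vᵀ) *ᵥ (W *ᵥ y)))
        ≤ ρ⁻¹ * (ρ⁻¹ * (d ⟨R - 1, by omega⟩ * (y ⬝ᵥ y))) := by
      have hinv : (0:ℝ) ≤ ρ⁻¹ := (inv_nonneg).mpr hρ.le
      exact mul_le_mul_of_nonneg_left (mul_le_mul_of_nonneg_left h1 hinv) hinv
    calc ρ⁻¹ * (ρ⁻¹ * (W *ᵥ y ⬝ᵥ (V * Matrix.diagonal d * Vᵀ) *ᵥ (W *ᵥ y)))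
        ≤ ρ⁻¹ * (ρ⁻¹ * (d ⟨R - 1, by omega⟩ * (y ⬝ᵥ y))) := h2
      _ = d ⟨R - 1, by omega⟩ := by
          rw [← hρ2]; field_simp

end eig


/-- at a global minimizer `X ∈ St(n,r)` of `f(X) = ½ tr(XᵀAXC) − tr(BᵀX)`,
the multiplier `Λ = Xᵀ(AXC − B)` satisfies `Λ ⪯ d_r C`, where `d_r` is the `r`-th smallest
eigenvalue of the symmetric matrix `A`. -/
theorem stmt6 {n r : ℕ} (hr0 : 0 < r) (hrn : r ≤ n)
    (A : Matrix (Fin n) (Fin n) ℝ) (hA : A.IsSymm)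
    (V : Matrix (Fin n) (Fin n) ℝ) (d : Fin n → ℝ) (hd : Monotone d)
    (hV : Vᵀ * V = 1) (hAV : A = V * Matrix.diagonal d * Vᵀ)
    (B : Matrix (Fin n) (Fin r) ℝ)
    (C : Matrix (Fin r) (Fin r) ℝ) (hC : C.PosDef)
    (X : Matrix (Fin n) (Fin r) ℝ) (hX : Xᵀ * X = 1)
    (hmin : ∀ Y : Matrix (Fin n) (Fin r) ℝ, Yᵀ * Y = 1 →
      (1 / 2 : ℝ) * (Xᵀ * A * X * C).trace - (Bᵀ * X).trace ≤
        (1 / 2 : ℝ) * (Yᵀ * A * Y * C).trace - (Bᵀ * Y).trace) :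
    (d ⟨r - 1, by omega⟩ • C - Xᵀ * (A * X * C - B)).PosSemidef := by
  have hAs : Aᵀ = A := hA
  have hCs : Cᵀ = C := by
    ext i j
    have h := congrFun (congrFun hC.1 i) j
    simpa [conjTranspose_apply] using h
  have hAsymdot : ∀ u v : Fin n → ℝ, u ⬝ᵥ (A *ᵥ v) = v ⬝ᵥ (A *ᵥ u) := by
    intro u v
    rw [dotProduct_comm, mulVec_dot, hAs]
  have fam1 : ∀ z : Fin r → ℝ, z ⬝ᵥ z = 1 → ∀ w : Fin n → ℝ, w ⬝ᵥ w = 1 → Xᵀ *ᵥ w = 0 →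
      ∀ p q : ℝ,
      0 ≤ (z ⬝ᵥ (C *ᵥ z) * (w ⬝ᵥ (A *ᵥ w)) - (X *ᵥ z) ⬝ᵥ ((A * X * C - B) *ᵥ z)) * q ^ 2
          + (-2 * (z ⬝ᵥ (C *ᵥ z)) * ((X *ᵥ z) ⬝ᵥ (A *ᵥ w))) * (p * q)
          + (z ⬝ᵥ (C *ᵥ z) * ((X *ᵥ z) ⬝ᵥ (A *ᵥ (X *ᵥ z)))
              - (X *ᵥ z) ⬝ᵥ ((A * X * C - B) *ᵥ z)) * p ^ 2 := by
    intro z hz w hww hXw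
    have hXx : Xᵀ *ᵥ (X *ᵥ z) = z := by
      rw [Matrix.mulVec_mulVec, hX, Matrix.one_mulVec]
    have hxx : (X *ᵥ z) ⬝ᵥ (X *ᵥ z) = 1 := by
      rw [mulVec_dot, hXx, hz]
    have hxw : (X *ᵥ z) ⬝ᵥ w = 0 := by
      rw [mulVec_dot, hXw, dotProduct_zero]
    have hwx : w ⬝ᵥ (X *ᵥ z) = 0 := by rw [dotProduct_comm]; exact hxw
    set lam := (X *ᵥ z) ⬝ᵥ ((A * X * C - B) *ᵥ z) with hlam
    set g := w ⬝ᵥ ((A * X * C - B) *ᵥ z) with hgdef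
    set α := (X *ᵥ z) ⬝ᵥ (A *ᵥ (X *ᵥ z)) with hα
    set β := w ⬝ᵥ (A *ᵥ w) with hβ
    set μ := (X *ᵥ z) ⬝ᵥ (A *ᵥ w) with hμ
    set γ := z ⬝ᵥ (C *ᵥ z) with hγ
    have Fnn : ∀ c s : ℝ, c ^ 2 + s ^ 2 = 1 →
        0 ≤ (c - 1) * lam + s * g
          + 1 / 2 * ((c - 1) ^ 2 * α + 2 * (s * (c - 1)) * μ + s ^ 2 * β) * γ := by
      intro c s hcs
      set v : Fin n → ℝ := (c - 1) • (X *ᵥ z) + s • w with hvdef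
      have hv : Xᵀ *ᵥ v = (c - 1) • z := by
        rw [hvdef, Matrix.mulVec_add, Matrix.mulVec_smul, Matrix.mulVec_smul, hXw, hXx,
          smul_zero, add_zero]
      have hvv : v ⬝ᵥ v = -((c - 1) + (c - 1)) := by
        rw [hvdef]
        simp only [add_dotProduct, dotProduct_add, smul_dotProduct, dotProduct_smul,
          smul_eq_mul, hxx, hxw, hwx, hww]
        linear_combination hcs
      have hle := hmin (X + vecMulVec v z) (feasGen X hX z v (c - 1) hv hvv)
      rw [EL A hAs B C hCs X v z] at hle
      have h0 : 0 ≤ v ⬝ᵥ ((A * X * C - B) *ᵥ z)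
          + 1 / 2 * (v ⬝ᵥ (A *ᵥ v)) * (z ⬝ᵥ (C *ᵥ z)) := by linarith
      have hv1 : v ⬝ᵥ ((A * X * C - B) *ᵥ z) = (c - 1) * lam + s * g := by
        rw [hvdef, add_dotProduct, smul_dotProduct, smul_dotProduct, smul_eq_mul, smul_eq_mul,
          hlam, hgdef]
      have hv2 : v ⬝ᵥ (A *ᵥ v) = (c - 1) ^ 2 * α + 2 * (s * (c - 1)) * μ + s ^ 2 * β := by
        rw [hvdef, Matrix.mulVec_add, Matrix.mulVec_smul, Matrix.mulVec_smul]
        simp only [add_dotProduct, dotProduct_add, smul_dotProduct, dotProduct_smul,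
          smul_eq_mul]
        have hswap : w ⬝ᵥ (A *ᵥ (X *ᵥ z)) = μ := by rw [hμ, hAsymdot]
        rw [hswap, ← hα, ← hβ, ← hμ]
        ring
      rw [hv1, hv2, ← hγ] at h0
      exact h0
    have key : ∀ τ : ℝ, 0 ≤ (2 * g) * τ + (2 * (γ * β) - 2 * lam) * τ ^ 2
        + (2 * g - 4 * (γ * μ)) * τ ^ 3 + (2 * (γ * α) - 2 * lam) * τ ^ 4 := by
      intro τ
      have hD : (0 : ℝ) < 1 + τ ^ 2 := by positivity
      have hcs : ((1 - τ ^ 2) / (1 + τ ^ 2)) ^ 2 + (2 * τ / (1 + τ ^ 2)) ^ 2 = 1 := by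
        field_simp; ring
      have h := Fnn _ _ hcs
      have h2 := mul_nonneg (by positivity : (0:ℝ) ≤ (1 + τ ^ 2) ^ 2) h
      have heq : (1 + τ ^ 2) ^ 2 * (((1 - τ ^ 2) / (1 + τ ^ 2) - 1) * lam
            + (2 * τ / (1 + τ ^ 2)) * g
            + 1 / 2 * (((1 - τ ^ 2) / (1 + τ ^ 2) - 1) ^ 2 * α
              + 2 * ((2 * τ / (1 + τ ^ 2)) * ((1 - τ ^ 2) / (1 + τ ^ 2) - 1)) * μ
              + (2 * τ / (1 + τ ^ 2)) ^ 2 * β) * γ)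
          = (2 * g) * τ + (2 * (γ * β) - 2 * lam) * τ ^ 2
            + (2 * g - 4 * (γ * μ)) * τ ^ 3 + (2 * (γ * α) - 2 * lam) * τ ^ 4 := by
        field_simp
        ring
      rw [heq] at h2
      exact h2
    have hg' : g = 0 := by have := polyA key; linarith
    have key2 : ∀ τ : ℝ, 0 ≤ (2 * (γ * β) - 2 * lam) * τ ^ 2
        + (2 * g - 4 * (γ * μ)) * τ ^ 3 + (2 * (γ * α) - 2 * lam) * τ ^ 4 := by
      intro τ
      have h := key τ
      rw [hg'] at h ⊢
      linarith [h]
    have quad := quad_form (quartic_to_quad key2)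
    intro p q
    have h := quad p q
    rw [hg'] at h
    nlinarith [h]
  -- reflection comparison: lam ≤ alpha * gamma
  have refl2 : ∀ z : Fin r → ℝ, z ⬝ᵥ z = 1 →
      (X *ᵥ z) ⬝ᵥ ((A * X * C - B) *ᵥ z)
        ≤ ((X *ᵥ z) ⬝ᵥ (A *ᵥ (X *ᵥ z))) * (z ⬝ᵥ (C *ᵥ z)) := by
    intro z hz
    have hXx : Xᵀ *ᵥ (X *ᵥ z) = z := by
      rw [Matrix.mulVec_mulVec, hX, Matrix.one_mulVec]
    have hxx : (X *ᵥ z) ⬝ᵥ (X *ᵥ z) = 1 := by rw [mulVec_dot, hXx, hz]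
    set v : Fin n → ℝ := (-2 : ℝ) • (X *ᵥ z) with hvdef
    have hv : Xᵀ *ᵥ v = (-2 : ℝ) • z := by rw [hvdef, Matrix.mulVec_smul, hXx]
    have hvv : v ⬝ᵥ v = -((-2 : ℝ) + -2) := by
      rw [hvdef, smul_dotProduct, dotProduct_smul, hxx]
      norm_num
    have hle := hmin (X + vecMulVec v z) (feasGen X hX z v (-2) hv hvv)
    rw [EL A hAs B C hCs X v z] at hle
    have hv1 : v ⬝ᵥ ((A * X * C - B) *ᵥ z)
        = (-2) * ((X *ᵥ z) ⬝ᵥ ((A * X * C - B) *ᵥ z)) := by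
      rw [hvdef, smul_dotProduct, smul_eq_mul]
    have hv2 : v ⬝ᵥ (A *ᵥ v) = 4 * ((X *ᵥ z) ⬝ᵥ (A *ᵥ (X *ᵥ z))) := by
      rw [hvdef, Matrix.mulVec_smul, smul_dotProduct, dotProduct_smul, smul_eq_mul, smul_eq_mul]
      ring
    rw [hv1, hv2] at hle
    nlinarith [hle]
  -- symmetry of the multiplier
  have hsymkey : ∀ z w : Fin r → ℝ, z ⬝ᵥ z = 1 → w ⬝ᵥ w = 1 → z ⬝ᵥ w = 0 →
      (X *ᵥ w) ⬝ᵥ ((A * X * C - B) *ᵥ z) = (X *ᵥ z) ⬝ᵥ ((A * X * C - B) *ᵥ w) := by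
    intro z w hz hw hzw
    have hwz : w ⬝ᵥ z = 0 := by rw [dotProduct_comm]; exact hzw
    have hXz : Xᵀ *ᵥ (X *ᵥ z) = z := by rw [Matrix.mulVec_mulVec, hX, Matrix.one_mulVec]
    have hXw : Xᵀ *ᵥ (X *ᵥ w) = w := by rw [Matrix.mulVec_mulVec, hX, Matrix.one_mulVec]
    have hxx : (X *ᵥ z) ⬝ᵥ (X *ᵥ z) = 1 := by rw [mulVec_dot, hXz, hz]
    have hww : (X *ᵥ w) ⬝ᵥ (X *ᵥ w) = 1 := by rw [mulVec_dot, hXw, hw]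
    have hxw : (X *ᵥ z) ⬝ᵥ (X *ᵥ w) = 0 := by rw [mulVec_dot, hXw, hzw]
    have hwx : (X *ᵥ w) ⬝ᵥ (X *ᵥ z) = 0 := by rw [mulVec_dot, hXz, hwz]
    set gz := (X *ᵥ z) ⬝ᵥ ((A * X * C - B) *ᵥ z) with hgz
    set gw := (X *ᵥ w) ⬝ᵥ ((A * X * C - B) *ᵥ w) with hgw
    set Hwz := (X *ᵥ w) ⬝ᵥ ((A * X * C - B) *ᵥ z) with hHwz
    set Hzw := (X *ᵥ z) ⬝ᵥ ((A * X * C - B) *ᵥ w) with hHzw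
    set sz := (X *ᵥ z) ⬝ᵥ (A *ᵥ (X *ᵥ z)) with hsz
    set sw := (X *ᵥ w) ⬝ᵥ (A *ᵥ (X *ᵥ w)) with hsw
    set szw := (X *ᵥ z) ⬝ᵥ (A *ᵥ (X *ᵥ w)) with hszw
    set swz := (X *ᵥ w) ⬝ᵥ (A *ᵥ (X *ᵥ z)) with hswz
    set gaz := z ⬝ᵥ (C *ᵥ z) with hgaz
    set gaw := w ⬝ᵥ (C *ᵥ w) with hgaw
    set gap := (C *ᵥ z) ⬝ᵥ w with hgap
    have Fnn : ∀ c s : ℝ, c ^ 2 + s ^ 2 = 1 →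
        0 ≤ ((c - 1) * gz + s * Hwz)
          + ((c - 1) * gw + (-s) * Hzw)
          + gap * ((c - 1) ^ 2 * swz + s * (c - 1) * sw - s * (c - 1) * sz - s ^ 2 * szw)
          + 1 / 2 * ((c - 1) ^ 2 * sz + s * (c - 1) * szw + s * (c - 1) * swz + s ^ 2 * sw) * gaz
          + 1 / 2 * ((c - 1) ^ 2 * sw - s * (c - 1) * swz - s * (c - 1) * szw + s ^ 2 * sz) * gaw := by
      intro c s hcs
      set v₁ : Fin n → ℝ := (c - 1) • (X *ᵥ z) + s • (X *ᵥ w) with hv1def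
      set v₂ : Fin n → ℝ := (c - 1) • (X *ᵥ w) + (-s) • (X *ᵥ z) with hv2def
      have hXv1 : Xᵀ *ᵥ v₁ = (c - 1) • z + s • w := by
        rw [hv1def, Matrix.mulVec_add, Matrix.mulVec_smul, Matrix.mulVec_smul, hXz, hXw]
      have hXv2 : Xᵀ *ᵥ v₂ = (c - 1) • w + (-s) • z := by
        rw [hv2def, Matrix.mulVec_add, Matrix.mulVec_smul, Matrix.mulVec_smul, hXz, hXw]
      have hv11 : v₁ ⬝ᵥ v₁ = 2 - (c + c) := by
        rw [hv1def]
        simp only [add_dotProduct, dotProduct_add, smul_dotProduct, dotProduct_smul,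
          smul_eq_mul, hxx, hww, hxw, hwx]
        linear_combination hcs
      have hv22 : v₂ ⬝ᵥ v₂ = 2 - (c + c) := by
        rw [hv2def]
        simp only [add_dotProduct, dotProduct_add, smul_dotProduct, dotProduct_smul,
          smul_eq_mul, hxx, hww, hxw, hwx]
        linear_combination hcs
      have hv12 : v₁ ⬝ᵥ v₂ = 0 := by
        rw [hv1def, hv2def]
        simp only [add_dotProduct, dotProduct_add, smul_dotProduct, dotProduct_smul,
          smul_eq_mul, hxx, hww, hxw, hwx]
        ring
      have hv21 : v₂ ⬝ᵥ v₁ = 0 := by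
        rw [hv1def, hv2def]
        simp only [add_dotProduct, dotProduct_add, smul_dotProduct, dotProduct_smul,
          smul_eq_mul, hxx, hww, hxw, hwx]
        ring
      have hfeas : (X + vecMulVec v₁ z + vecMulVec v₂ w)ᵀ
          * (X + vecMulVec v₁ z + vecMulVec v₂ w) = 1 := by
        rw [transpose_add, transpose_add, vmv_transpose, vmv_transpose]
        simp only [Matrix.add_mul, Matrix.mul_add]
        rw [hX, mul_vmv Xᵀ v₁ z, mul_vmv Xᵀ v₂ w, hXv1, hXv2,
          vmv_mul z v₁ X, vmv_mul w v₂ X, hXv1, hXv2,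
          vmv_mul_vmv z v₁ v₁ z, vmv_mul_vmv z v₁ v₂ w,
          vmv_mul_vmv w v₂ v₁ z, vmv_mul_vmv w v₂ v₂ w,
          hv11, hv22, hv12, hv21]
        simp only [vmv_add_left, vmv_add_right, vmv_smul_left, vmv_smul_right]
        module
      have hle := hmin _ hfeas
      rw [EL A hAs B C hCs (X + vecMulVec v₁ z) v₂ w, EL A hAs B C hCs X v₁ z] at hle
      have hre : A * (X + vecMulVec v₁ z) * C - B
          = (A * X * C - B) + vecMulVec (A *ᵥ v₁) (Cᵀ *ᵥ z) := by
        rw [Matrix.mul_add, Matrix.add_mul, mul_vmv, vmv_mul]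
        abel
      rw [hre] at hle
      have hcross : v₂ ⬝ᵥ (((A * X * C - B) + vecMulVec (A *ᵥ v₁) (Cᵀ *ᵥ z)) *ᵥ w)
          = v₂ ⬝ᵥ ((A * X * C - B) *ᵥ w) + ((C *ᵥ z) ⬝ᵥ w) * (v₂ ⬝ᵥ (A *ᵥ v₁)) := by
        rw [Matrix.add_mulVec, vmv_mulVec, dotProduct_add, dotProduct_smul, hCs, smul_eq_mul]
      rw [hcross] at hle
      have h0 : 0 ≤ v₁ ⬝ᵥ ((A * X * C - B) *ᵥ z) + 1 / 2 * (v₁ ⬝ᵥ (A *ᵥ v₁)) * (z ⬝ᵥ (C *ᵥ z))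
          + v₂ ⬝ᵥ ((A * X * C - B) *ᵥ w) + ((C *ᵥ z) ⬝ᵥ w) * (v₂ ⬝ᵥ (A *ᵥ v₁))
          + 1 / 2 * (v₂ ⬝ᵥ (A *ᵥ v₂)) * (w ⬝ᵥ (C *ᵥ w)) := by linarith
      have e1 : v₁ ⬝ᵥ ((A * X * C - B) *ᵥ z) = (c - 1) * gz + s * Hwz := by
        rw [hv1def, add_dotProduct, smul_dotProduct, smul_dotProduct, smul_eq_mul, smul_eq_mul,
          ← hgz, ← hHwz]
      have e2 : v₂ ⬝ᵥ ((A * X * C - B) *ᵥ w) = (c - 1) * gw + (-s) * Hzw := by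
        rw [hv2def, add_dotProduct, smul_dotProduct, smul_dotProduct, smul_eq_mul, smul_eq_mul,
          ← hgw, ← hHzw]
      have e3 : v₂ ⬝ᵥ (A *ᵥ v₁)
          = (c - 1) ^ 2 * swz + s * (c - 1) * sw - s * (c - 1) * sz - s ^ 2 * szw := by
        rw [hv1def, hv2def, Matrix.mulVec_add, Matrix.mulVec_smul, Matrix.mulVec_smul]
        simp only [add_dotProduct, dotProduct_add, smul_dotProduct, dotProduct_smul, smul_eq_mul]
        rw [← hswz, ← hsw, ← hsz, ← hszw]
        ring
      have e4 : v₁ ⬝ᵥ (A *ᵥ v₁)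
          = (c - 1) ^ 2 * sz + s * (c - 1) * szw + s * (c - 1) * swz + s ^ 2 * sw := by
        rw [hv1def, Matrix.mulVec_add, Matrix.mulVec_smul, Matrix.mulVec_smul]
        simp only [add_dotProduct, dotProduct_add, smul_dotProduct, dotProduct_smul, smul_eq_mul]
        rw [← hsz, ← hszw, ← hswz, ← hsw]
        ring
      have e5 : v₂ ⬝ᵥ (A *ᵥ v₂)
          = (c - 1) ^ 2 * sw - s * (c - 1) * swz - s * (c - 1) * szw + s ^ 2 * sz := by
        rw [hv2def, Matrix.mulVec_add, Matrix.mulVec_smul, Matrix.mulVec_smul]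
        simp only [add_dotProduct, dotProduct_add, smul_dotProduct, dotProduct_smul, smul_eq_mul]
        rw [← hsz, ← hszw, ← hswz, ← hsw]
        ring
      rw [e1, e2, e3, e4, e5, ← hgaz, ← hgaw, ← hgap] at h0
      linarith [h0]
    have key : ∀ τ : ℝ, 0 ≤ (2 * Hwz - 2 * Hzw) * τ
        + (-2 * gz - 2 * gw - 4 * (gap * szw) + 2 * (gaz * sw) + 2 * (gaw * sz)) * τ ^ 2
        + (2 * Hwz - 2 * Hzw - 4 * (gap * (sw - sz)) - 2 * (gaz * (szw + swz))
            + 2 * (gaw * (swz + szw))) * τ ^ 3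
        + (-2 * gz - 2 * gw + 4 * (gap * swz) + 2 * (gaz * sz) + 2 * (gaw * sw)) * τ ^ 4 := by
      intro τ
      have hD : (0 : ℝ) < 1 + τ ^ 2 := by positivity
      have hcs : ((1 - τ ^ 2) / (1 + τ ^ 2)) ^ 2 + (2 * τ / (1 + τ ^ 2)) ^ 2 = 1 := by
        field_simp; ring
      have h := Fnn _ _ hcs
      have h2 := mul_nonneg (by positivity : (0:ℝ) ≤ (1 + τ ^ 2) ^ 2) h
      set c : ℝ := (1 - τ ^ 2) / (1 + τ ^ 2) with hc
      set s : ℝ := 2 * τ / (1 + τ ^ 2) with hs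
      have heq : (1 + τ ^ 2) ^ 2 * (((c - 1) * gz + s * Hwz)
          + ((c - 1) * gw + (-s) * Hzw)
          + gap * ((c - 1) ^ 2 * swz + s * (c - 1) * sw - s * (c - 1) * sz - s ^ 2 * szw)
          + 1 / 2 * ((c - 1) ^ 2 * sz + s * (c - 1) * szw + s * (c - 1) * swz + s ^ 2 * sw) * gaz
          + 1 / 2 * ((c - 1) ^ 2 * sw - s * (c - 1) * swz - s * (c - 1) * szw + s ^ 2 * sz) * gaw)
          = (2 * Hwz - 2 * Hzw) * τ
          + (-2 * gz - 2 * gw - 4 * (gap * szw) + 2 * (gaz * sw) + 2 * (gaw * sz)) * τ ^ 2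
          + (2 * Hwz - 2 * Hzw - 4 * (gap * (sw - sz)) - 2 * (gaz * (szw + swz))
              + 2 * (gaw * (swz + szw))) * τ ^ 3
          + (-2 * gz - 2 * gw + 4 * (gap * swz) + 2 * (gaz * sz) + 2 * (gaw * sw)) * τ ^ 4 := by
        rw [hc, hs]
        field_simp
        ring
      rw [heq] at h2
      exact h2
    have := polyA key
    linarith
  have hCpos : ∀ z : Fin r → ℝ, 0 ≤ z ⬝ᵥ (C *ᵥ z) := by
    intro z
    have h := hC.posSemidef.dotProduct_mulVec_nonneg z
    simpa using h
  have hmain : ∀ z : Fin r → ℝ, z ⬝ᵥ z = 1 →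
      (X *ᵥ z) ⬝ᵥ ((A * X * C - B) *ᵥ z) ≤ d ⟨r - 1, by omega⟩ * (z ⬝ᵥ (C *ᵥ z)) := by
    intro z hz
    obtain ⟨u, κ, huu, hXu, huA⟩ := exists_dir hr0 hrn V d hd hV X z hz
    rw [← hAV] at huA
    have hXz : Xᵀ *ᵥ (X *ᵥ z) = z := by rw [Matrix.mulVec_mulVec, hX, Matrix.one_mulVec]
    have hxx : (X *ᵥ z) ⬝ᵥ (X *ᵥ z) = 1 := by rw [mulVec_dot, hXz, hz]
    have hxu : (X *ᵥ z) ⬝ᵥ u = κ := by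
      rw [mulVec_dot, hXu, dotProduct_smul, hz, smul_eq_mul, mul_one]
    have hux : u ⬝ᵥ (X *ᵥ z) = κ := by rw [dotProduct_comm]; exact hxu
    have hγ := hCpos z
    set w₀ : Fin n → ℝ := u - κ • (X *ᵥ z) with hw0def
    have hXw₀ : Xᵀ *ᵥ w₀ = 0 := by
      rw [hw0def, Matrix.mulVec_sub, Matrix.mulVec_smul, hXu, hXz, sub_self]
    have hw00 : w₀ ⬝ᵥ w₀ = 1 - κ ^ 2 := by
      rw [hw0def]
      simp only [sub_dotProduct, dotProduct_sub, smul_dotProduct, dotProduct_smul,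
        smul_eq_mul, huu, hxx, hxu, hux]
      ring
    by_cases hw0 : w₀ = 0
    · have hu : u = κ • (X *ᵥ z) := by
        have h' : u - κ • (X *ᵥ z) = 0 := by rw [← hw0def]; exact hw0
        exact sub_eq_zero.mp h'
      have hκ : κ * κ = 1 := by
        have h' := hw00
        rw [hw0] at h'
        simp at h'
        nlinarith [h']
      have hα : u ⬝ᵥ (A *ᵥ u) = (X *ᵥ z) ⬝ᵥ (A *ᵥ (X *ᵥ z)) := by
        rw [hu, smul_dotProduct, Matrix.mulVec_smul, dotProduct_smul, smul_eq_mul, smul_eq_mul,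
          ← mul_assoc, hκ, one_mul]
      have h1 := refl2 z hz
      have h2 : (X *ᵥ z) ⬝ᵥ (A *ᵥ (X *ᵥ z)) ≤ d ⟨r - 1, by omega⟩ := by rw [← hα]; exact huA
      have h3 := mul_le_mul_of_nonneg_right h2 hγ
      linarith
    · have hw00pos : 0 < w₀ ⬝ᵥ w₀ :=
        lt_of_le_of_ne (Finset.sum_nonneg fun i _ => mul_self_nonneg _)
          (fun h => hw0 (dotProduct_self_eq_zero.mp h.symm))
      set s₀ : ℝ := Real.sqrt (w₀ ⬝ᵥ w₀) with hs₀def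
      have hs₀ : 0 < s₀ := Real.sqrt_pos.mpr hw00pos
      have hs₀2 : s₀ * s₀ = w₀ ⬝ᵥ w₀ := Real.mul_self_sqrt hw00pos.le
      set w : Fin n → ℝ := s₀⁻¹ • w₀ with hwdef
      have hXw : Xᵀ *ᵥ w = 0 := by rw [hwdef, Matrix.mulVec_smul, hXw₀, smul_zero]
      have hww : w ⬝ᵥ w = 1 := by
        rw [hwdef, smul_dotProduct, dotProduct_smul, smul_eq_mul, smul_eq_mul, ← hs₀2]
        field_simp
      have hus : u = κ • (X *ᵥ z) + s₀ • w := by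
        rw [hwdef, smul_smul, mul_inv_cancel₀ hs₀.ne', one_smul, hw0def]
        abel
      have hk2 : κ ^ 2 + s₀ ^ 2 = 1 := by nlinarith [hw00, hs₀2]
      have huAu : u ⬝ᵥ (A *ᵥ u) = κ ^ 2 * ((X *ᵥ z) ⬝ᵥ (A *ᵥ (X *ᵥ z)))
          + 2 * (κ * s₀) * ((X *ᵥ z) ⬝ᵥ (A *ᵥ w)) + s₀ ^ 2 * (w ⬝ᵥ (A *ᵥ w)) := by
        rw [hus, Matrix.mulVec_add, Matrix.mulVec_smul, Matrix.mulVec_smul]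
        simp only [add_dotProduct, dotProduct_add, smul_dotProduct, dotProduct_smul, smul_eq_mul]
        rw [hAsymdot w (X *ᵥ z)]
        ring
      have hfam := fam1 z hz w hww hXw κ (-s₀)
      have e : (z ⬝ᵥ (C *ᵥ z) * (w ⬝ᵥ (A *ᵥ w)) - (X *ᵥ z) ⬝ᵥ ((A * X * C - B) *ᵥ z)) * (-s₀) ^ 2
          + (-2 * (z ⬝ᵥ (C *ᵥ z)) * ((X *ᵥ z) ⬝ᵥ (A *ᵥ w))) * (κ * -s₀)
          + (z ⬝ᵥ (C *ᵥ z) * ((X *ᵥ z) ⬝ᵥ (A *ᵥ (X *ᵥ z)))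
              - (X *ᵥ z) ⬝ᵥ ((A * X * C - B) *ᵥ z)) * κ ^ 2
          = (z ⬝ᵥ (C *ᵥ z)) * (u ⬝ᵥ (A *ᵥ u)) - (X *ᵥ z) ⬝ᵥ ((A * X * C - B) *ᵥ z) := by
        rw [huAu]
        linear_combination (-((X *ᵥ z) ⬝ᵥ ((A * X * C - B) *ᵥ z))) * hk2
      rw [e] at hfam
      have h3 := mul_le_mul_of_nonneg_left huA hγ
      linarith
  -- symmetry of the multiplier matrix
  have hLsym : (Xᵀ * (A * X * C - B))ᵀ = Xᵀ * (A * X * C - B) := by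
    have hXG : ∀ a b : Fin r,
        (X *ᵥ Pi.single a 1) ⬝ᵥ ((A * X * C - B) *ᵥ Pi.single b 1)
          = (Xᵀ * (A * X * C - B)) a b := by
      intro a b
      rw [mulVec_dot, Matrix.mulVec_mulVec]
      simp [mulVec, dotProduct, Pi.single_apply, mul_ite, ite_mul, Finset.sum_ite_eq,
        Finset.sum_ite_eq']
    ext a b
    rw [transpose_apply]
    rcases eq_or_ne a b with rfl | hab
    · rfl
    · have hz1 : (Pi.single b 1 : Fin r → ℝ) ⬝ᵥ Pi.single b 1 = 1 := by
        simp [dotProduct, Pi.single_apply]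
      have hw1 : (Pi.single a 1 : Fin r → ℝ) ⬝ᵥ Pi.single a 1 = 1 := by
        simp [dotProduct, Pi.single_apply]
      have hzw0 : (Pi.single b 1 : Fin r → ℝ) ⬝ᵥ Pi.single a 1 = 0 := by
        simp [dotProduct, Pi.single_apply]
        exact hab
      have h := hsymkey (Pi.single b 1) (Pi.single a 1) hz1 hw1 hzw0
      rw [hXG, hXG] at h
      exact h.symm
  refine posSemidef_iff_dotProduct_mulVec.mpr ⟨?_, ?_⟩
  · have ht : (d ⟨r - 1, by omega⟩ • C - Xᵀ * (A * X * C - B))ᵀ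
        = d ⟨r - 1, by omega⟩ • C - Xᵀ * (A * X * C - B) := by
      rw [transpose_sub, transpose_smul, hCs, hLsym]
    have hent := fun i j => congrFun (congrFun ht i) j
    ext i j
    simp only [conjTranspose_apply, transpose_apply] at hent ⊢
    rw [← hent j i]
    simp
  · intro x
    rcases eq_or_ne x 0 with rfl | hx
    · simp
    · have hxx0 : 0 < x ⬝ᵥ x :=
        lt_of_le_of_ne (Finset.sum_nonneg fun i _ => mul_self_nonneg _)
          (fun h => hx (dotProduct_self_eq_zero.mp h.symm))
      set ν : ℝ := Real.sqrt (x ⬝ᵥ x) with hνdef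
      have hν0 : 0 < ν := Real.sqrt_pos.mpr hxx0
      have hν2 : ν * ν = x ⬝ᵥ x := Real.mul_self_sqrt hxx0.le
      set z : Fin r → ℝ := ν⁻¹ • x with hzdef
      have hz : z ⬝ᵥ z = 1 := by
        rw [hzdef, smul_dotProduct, dotProduct_smul, smul_eq_mul, smul_eq_mul, ← hν2]
        field_simp
      have hform : ∀ y : Fin r → ℝ,
          y ⬝ᵥ ((d ⟨r - 1, by omega⟩ • C - Xᵀ * (A * X * C - B)) *ᵥ y)
            = d ⟨r - 1, by omega⟩ * (y ⬝ᵥ (C *ᵥ y))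
              - (X *ᵥ y) ⬝ᵥ ((A * X * C - B) *ᵥ y) := by
        intro y
        rw [Matrix.sub_mulVec, dotProduct_sub, Matrix.smul_mulVec, dotProduct_smul,
          smul_eq_mul, mulVec_dot X y, Matrix.mulVec_mulVec]
      have hzq : 0 ≤ z ⬝ᵥ ((d ⟨r - 1, by omega⟩ • C - Xᵀ * (A * X * C - B)) *ᵥ z) := by
        rw [hform z]
        have := hmain z hz
        linarith
      have hscale : x ⬝ᵥ ((d ⟨r - 1, by omega⟩ • C - Xᵀ * (A * X * C - B)) *ᵥ x)
          = ν * (ν * (z ⬝ᵥ ((d ⟨r - 1, by omega⟩ • C - Xᵀ * (A * X * C - B)) *ᵥ z))) := by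
        rw [hzdef, smul_dotProduct, Matrix.mulVec_smul, dotProduct_smul, smul_eq_mul,
          smul_eq_mul]
        field_simp
      have hfin : 0 ≤ x ⬝ᵥ ((d ⟨r - 1, by omega⟩ • C - Xᵀ * (A * X * C - B)) *ᵥ x) := by
        rw [hscale]
        exact mul_nonneg hν0.le (mul_nonneg hν0.le hzq)
      simpa using hfin
end

section
/- Let X' ∈ St(n,r) be a stationary point of f(X) = ½ tr(XᵀAXC) − tr(BᵀX) (i.e. AX'C − B = X'Λ' with Λ' symmetric) and suppose the multiplier satisfies Λ' ⪯ d₁ C, where d₁ is the smallest eigenvalue of A. Then X' is a global minimizer of f over St(n,r). If moreover Λ' ≺ d₁C strictly, then X' is the unique global minimizer. -/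
open Matrix

private lemma stmt7_diag {r m : ℕ} (S : Matrix (Fin m) (Fin r) ℝ)
    (Q : Matrix (Fin r) (Fin r) ℝ) (i : Fin m) :
    (S * Q * Sᴴ) i i = star (fun j => S i j) ⬝ᵥ Q *ᵥ (fun j => S i j) := by
  simp only [mul_apply, dotProduct, mulVec, Finset.mul_sum, Finset.sum_mul, star,
    Pi.star_apply, star_trivial, conjTranspose_apply]
  rw [Finset.sum_comm]
  exact Finset.sum_congr rfl fun a _ => Finset.sum_congr rfl fun b _ => by
    simp [mul_comm, mul_left_comm]

open scoped MatrixOrder in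
private lemma stmt7_tr_nonneg {r : ℕ} {P Q : Matrix (Fin r) (Fin r) ℝ}
    (hP : P.PosSemidef) (hQ : Q.PosSemidef) : 0 ≤ (P * Q).trace := by
  obtain ⟨S, rfl⟩ := (CStarAlgebra.nonneg_iff_eq_star_mul_self.mp hP.nonneg).imp
    fun _ h => by rwa [star_eq_conjTranspose] at h
  rw [Matrix.mul_assoc, trace_mul_comm, Matrix.trace]
  apply Finset.sum_nonneg
  intro i _
  rw [Matrix.diag_apply, stmt7_diag]
  exact hQ.dotProduct_mulVec_nonneg _

open scoped MatrixOrder in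
private lemma stmt7_tr_zero {r : ℕ} {P Q : Matrix (Fin r) (Fin r) ℝ}
    (hP : P.PosSemidef) (hQ : Q.PosDef) (h : (P * Q).trace = 0) : P = 0 := by
  obtain ⟨S, rfl⟩ := (CStarAlgebra.nonneg_iff_eq_star_mul_self.mp hP.nonneg).imp
    fun _ h => by rwa [star_eq_conjTranspose] at h
  rw [Matrix.mul_assoc, trace_mul_comm, Matrix.trace] at h
  have hz : ∀ i, (S * Q * Sᴴ).diag i = 0 := fun i =>
    (Finset.sum_eq_zero_iff_of_nonneg (fun i _ => by
      rw [Matrix.diag_apply, stmt7_diag]; exact hQ.posSemidef.dotProduct_mulVec_nonneg _)).mp h i (Finset.mem_univ i)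
  have hS : S = 0 := by
    ext i j
    by_contra hne
    have hrow : (fun j => S i j) ≠ 0 := fun hc => hne (by simpa using congrFun hc j)
    have hpos := hQ.dotProduct_mulVec_pos hrow
    rw [← stmt7_diag S Q i] at hpos
    exact absurd (hz i) (by simpa [Matrix.diag_apply] using hpos.ne')
  simp [hS]

private lemma stmt7_key {n r : ℕ} (A : Matrix (Fin n) (Fin n) ℝ) (hA : A.IsSymm)
    (d1 : ℝ)
    (B : Matrix (Fin n) (Fin r) ℝ)
    (C : Matrix (Fin r) (Fin r) ℝ) (hC : C.PosDef)
    (X' : Matrix (Fin n) (Fin r) ℝ) (hX' : X'ᵀ * X' = 1)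
    (Λ' : Matrix (Fin r) (Fin r) ℝ) (hΛsymm : Λ'.IsSymm)
    (hstat : A * X' * C - B = X' * Λ')
    (Y : Matrix (Fin n) (Fin r) ℝ) (hY : Yᵀ * Y = 1) :
    ((Y - X')ᵀ * (A - d1 • (1 : Matrix (Fin n) (Fin n) ℝ)) * (Y - X') * C).trace
      + ((Y - X')ᵀ * (Y - X') * (d1 • C - Λ')).trace
    = 2 * ((1 / 2 : ℝ) * (Yᵀ * A * Y * C).trace - (Bᵀ * Y).trace)
      - 2 * ((1 / 2 : ℝ) * (X'ᵀ * A * X' * C).trace - (Bᵀ * X').trace) := by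
  have hAs : Aᵀ = A := hA
  have hCs : Cᵀ = C := by
    have := hC.isHermitian
    rwa [IsHermitian, conjTranspose_eq_transpose_of_trivial] at this
  have hΛs : Λ'ᵀ = Λ' := hΛsymm
  have e1 : (X'ᵀ * A * Y * C).trace = (Yᵀ * A * X' * C).trace := by
    rw [← trace_transpose]
    simp only [transpose_mul, transpose_transpose, hAs, hCs]
    rw [trace_mul_comm]
    simp [Matrix.mul_assoc]
  have e2 : (X'ᵀ * Y * Λ').trace = (Yᵀ * X' * Λ').trace := by
    rw [← trace_transpose]
    simp only [transpose_mul, transpose_transpose, hΛs]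
    rw [trace_mul_comm]
  have e3 : (Yᵀ * X' * Λ').trace = (Yᵀ * A * X' * C).trace - (Bᵀ * Y).trace := by
    rw [Matrix.mul_assoc, ← hstat, Matrix.mul_sub, trace_sub]
    congr 1
    · simp [Matrix.mul_assoc]
    · rw [← trace_transpose]; simp
  have e4 : Λ'.trace = (X'ᵀ * A * X' * C).trace - (Bᵀ * X').trace := by
    rw [show Λ'.trace = (X'ᵀ * X' * Λ').trace by rw [hX', Matrix.one_mul]]
    rw [Matrix.mul_assoc, ← hstat, Matrix.mul_sub, trace_sub]
    congr 1
    · simp [Matrix.mul_assoc]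
    · rw [← trace_transpose]; simp
  simp only [transpose_sub, Matrix.sub_mul, Matrix.mul_sub, Matrix.smul_mul, Matrix.mul_smul,
    Matrix.mul_one, Matrix.one_mul, trace_sub, trace_smul, hY, hX', smul_eq_mul]
  linarith [e1, e2, e3, e4]

/-- a stationary point `X'` of `f(X) = ½ tr(XᵀAXC) − tr(BᵀX)` whose multiplier
satisfies `Λ' ⪯ d₁C` (with `d₁` the smallest eigenvalue of `A`) is a global minimizer;
if `Λ' ≺ d₁C` strictly, then it is the unique global minimizer. -/
theorem stmt7 {n r : ℕ} (A : Matrix (Fin n) (Fin n) ℝ) (hA : A.IsSymm)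
    (d1 : ℝ)
    (hd1psd : (A - d1 • (1 : Matrix (Fin n) (Fin n) ℝ)).PosSemidef)
    (hd1eig : ∃ v : Fin n → ℝ, v ≠ 0 ∧ A.mulVec v = d1 • v)
    (B : Matrix (Fin n) (Fin r) ℝ)
    (C : Matrix (Fin r) (Fin r) ℝ) (hC : C.PosDef)
    (X' : Matrix (Fin n) (Fin r) ℝ) (hX' : X'ᵀ * X' = 1)
    (Λ' : Matrix (Fin r) (Fin r) ℝ) (hΛsymm : Λ'.IsSymm)
    (hstat : A * X' * C - B = X' * Λ')
    (hqual : (d1 • C - Λ').PosSemidef) :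
    (∀ Y : Matrix (Fin n) (Fin r) ℝ, Yᵀ * Y = 1 →
      (1 / 2 : ℝ) * (X'ᵀ * A * X' * C).trace - (Bᵀ * X').trace ≤
        (1 / 2 : ℝ) * (Yᵀ * A * Y * C).trace - (Bᵀ * Y).trace) ∧
    ((d1 • C - Λ').PosDef →
      ∀ Y : Matrix (Fin n) (Fin r) ℝ, Yᵀ * Y = 1 →
        (1 / 2 : ℝ) * (Yᵀ * A * Y * C).trace - (Bᵀ * Y).trace =
          (1 / 2 : ℝ) * (X'ᵀ * A * X' * C).trace - (Bᵀ * X').trace → Y = X') := by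
  have hT : ∀ Y : Matrix (Fin n) (Fin r) ℝ, Yᵀ * Y = 1 →
      0 ≤ ((Y - X')ᵀ * (A - d1 • (1 : Matrix (Fin n) (Fin n) ℝ)) * (Y - X') * C).trace ∧
      0 ≤ ((Y - X')ᵀ * (Y - X') * (d1 • C - Λ')).trace := by
    intro Y hY
    constructor
    · have h1 : ((Y - X')ᵀ * (A - d1 • (1 : Matrix (Fin n) (Fin n) ℝ)) * (Y - X')).PosSemidef := by
        have := hd1psd.conjTranspose_mul_mul_same (Y - X')
        rwa [conjTranspose_eq_transpose_of_trivial] at this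
      exact stmt7_tr_nonneg h1 hC.posSemidef
    · have h2 : ((Y - X')ᵀ * (Y - X')).PosSemidef := by
        have := posSemidef_conjTranspose_mul_self (Y - X')
        rwa [conjTranspose_eq_transpose_of_trivial] at this
      exact stmt7_tr_nonneg h2 hqual
  constructor
  · intro Y hY
    have key := stmt7_key A hA d1 B C hC X' hX' Λ' hΛsymm hstat Y hY
    obtain ⟨h1, h2⟩ := hT Y hY
    linarith
  · intro hpd Y hY heq
    have key := stmt7_key A hA d1 B C hC X' hX' Λ' hΛsymm hstat Y hY
    obtain ⟨h1, h2⟩ := hT Y hY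
    have h2z : ((Y - X')ᵀ * (Y - X') * (d1 • C - Λ')).trace = 0 := by linarith
    have hP : ((Y - X')ᵀ * (Y - X')).PosSemidef := by
      have := posSemidef_conjTranspose_mul_self (Y - X')
      rwa [conjTranspose_eq_transpose_of_trivial] at this
    have hz := stmt7_tr_zero hP hpd h2z
    have : Y - X' = 0 := by
      have h := conjTranspose_mul_self_eq_zero (A := Y - X')
      rw [conjTranspose_eq_transpose_of_trivial] at h
      exact h.mp hz
    exact sub_eq_zero.mp this
end

section
/- Suppose C = I_r and the left singular vectors of B (of rank r) span the same subspace as the ground eigenvectors V_g of A (eigenvectors for the r smallest eigenvalues d₁ ≤ … ≤ d_r). Then X = P_M(B) = U_B V_Bᵀ (polar factor of B) is a global minimizer of f(X) = ½ tr(XᵀAX) − tr(BᵀX) over St(n,r), and the cost satisfies the lower bound f(X) ≥ ½(d₁+⋯+d_r) − ‖B‖_* for all X ∈ St(n,r), with equality attained at this X. -/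
/-!
With `Z = Vᵀ Y`, `tr(Yᵀ A Y) = ∑ₖ dₖ (Z Zᵀ)ₖₖ`, and the weights `(Z Zᵀ)ₖₖ` lie in `[0, 1]` and sum
to `r` because `Z Zᵀ` is an orthogonal projection of rank `r`. For increasing `d` such a weighted
sum is smallest when all the weight sits on the first `r` indices (Ky Fan). Writing
`B = U_B D_B V_Bᵀ`, `tr(Bᵀ Y) = ∑ᵢ sᵢ (U_Bᵀ Y V_B)ᵢᵢ`, and every entry of `U_Bᵀ Y V_B` is an inner
product of two unit vectors, hence at most `1`; so `tr(Bᵀ Y) ≤ ∑ᵢ sᵢ = ‖B‖_*`. The polar factor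
`U_B V_Bᵀ` attains both bounds because its columns span the ground eigenspace of `A`.
-/

open Matrix

lemma Finset.sum_le_sum_mul_of_threshold {ι : Type*} [Fintype ι] [DecidableEq ι] (S : Finset ι)
    {d p : ι → ℝ} (c : ℝ) (hS : ∀ k ∈ S, d k ≤ c) (hSc : ∀ k ∉ S, c ≤ d k)
    (hp0 : ∀ k, 0 ≤ p k) (hp1 : ∀ k, p k ≤ 1) (hp : ∑ k, p k = S.card) :
    ∑ k ∈ S, d k ≤ ∑ k, d k * p k := by
  have hterm : ∀ k, 0 ≤ (d k - c) * (p k - if k ∈ S then 1 else 0) := fun k => by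
    by_cases hk : k ∈ S
    · simp only [hk, if_true]; nlinarith [hS k hk, hp1 k]
    · simp only [hk, if_false]; nlinarith [hSc k hk, hp0 k]
  have hsum : ∑ k, (d k - c) * (p k - if k ∈ S then 1 else 0) =
      ∑ k, d k * p k - ∑ k ∈ S, d k - c * (∑ k, p k - S.card) := by
    simp only [mul_sub, sub_mul, mul_ite, mul_one, mul_zero, Finset.sum_sub_distrib,
      Finset.sum_ite_mem, Finset.univ_inter, ← Finset.mul_sum, Finset.sum_const, nsmul_eq_mul]
    ring
  have := Finset.sum_nonneg fun k (_ : k ∈ Finset.univ) => hterm k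
  rw [hsum, hp] at this
  linarith

lemma Fin.mem_map_castLEEmb_univ {n r : ℕ} (hrn : r ≤ n) (k : Fin n) :
    k ∈ Finset.univ.map (Fin.castLEEmb hrn) ↔ (k : ℕ) < r := by
  simp only [Finset.mem_map, Finset.mem_univ, true_and, Fin.castLEEmb_apply]
  exact ⟨fun ⟨i, hi⟩ => hi ▸ i.isLt, fun hk => ⟨⟨k, hk⟩, rfl⟩⟩

lemma Monotone.exists_threshold_castLE {n r : ℕ} (hrn : r ≤ n) {d : Fin n → ℝ}
    (hd : Monotone d) : ∃ c, ∀ k : Fin n, ((k : ℕ) < r → d k ≤ c) ∧ (r ≤ (k : ℕ) → c ≤ d k) := by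
  rcases hrn.lt_or_eq with hr | rfl
  · exact ⟨d ⟨r, hr⟩, fun k => ⟨fun hk => hd (Fin.le_def.2 hk.le), fun hk => hd hk⟩⟩
  · refine ⟨∑ k, |d k|, fun k => ⟨fun _ => ?_, fun hk => absurd k.isLt hk.not_gt⟩⟩
    exact (le_abs_self _).trans (Finset.single_le_sum (fun l _ => abs_nonneg (d l))
      (Finset.mem_univ k))

namespace Matrix

variable {m n r : Type*}

lemma mul_transpose_self_diag_nonneg [Fintype n] (Z : Matrix m n ℝ) (k : m) :
    0 ≤ (Z * Zᵀ) k k := by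
  simpa only [mul_apply, transpose_apply] using
    Finset.sum_nonneg fun j _ => mul_self_nonneg (Z k j)

lemma mul_transpose_self_diag_le_one [Fintype m] [Fintype r] [DecidableEq r]
    {Z : Matrix m r ℝ} (hZ : Zᵀ * Z = 1) (k : m) : (Z * Zᵀ) k k ≤ 1 := by
  set P := Z * Zᵀ
  have hidem : P * P = P := by
    rw [Matrix.mul_assoc, ← Matrix.mul_assoc Zᵀ, hZ, Matrix.one_mul]
  have hsymm : Pᵀ = P := by rw [transpose_mul, transpose_transpose]
  -- idempotence and symmetry make `P k k` the squared norm of the `k`-th row of `P`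
  have hsq : P k k * P k k ≤ P k k := calc
    P k k * P k k ≤ ∑ l, P k l * P k l :=
      Finset.single_le_sum (f := fun l => P k l * P k l) (fun l _ => mul_self_nonneg _)
        (Finset.mem_univ k)
    _ = P k k := by
      conv_rhs => rw [← hidem, mul_apply]
      refine Finset.sum_congr rfl fun l _ => ?_
      rw [← transpose_apply P l k, hsymm]
  nlinarith [mul_transpose_self_diag_nonneg Z k]

lemma sum_mul_transpose_self_diag [Fintype m] [Fintype r] [DecidableEq r]
    {Z : Matrix m r ℝ} (hZ : Zᵀ * Z = 1) : ∑ k, (Z * Zᵀ) k k = Fintype.card r := by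
  rw [← trace_one (n := r) (R := ℝ), ← hZ, trace_mul_comm]; rfl

lemma transpose_mul_apply_le_one [Fintype n] [DecidableEq r] {U Y : Matrix n r ℝ}
    (hU : Uᵀ * U = 1) (hY : Yᵀ * Y = 1) (i j : r) : (Uᵀ * Y) i j ≤ 1 := by
  have hcol : ∀ {Z : Matrix n r ℝ}, Zᵀ * Z = 1 → ∀ i, ∑ k, Z k i ^ 2 = 1 := fun hZ i => by
    simpa [mul_apply, sq] using congrFun (congrFun hZ i) i
  have hamgm : ∀ k, 2 * (U k i * Y k j) ≤ U k i ^ 2 + Y k j ^ 2 := fun k => by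
    rw [← mul_assoc]; exact two_mul_le_add_sq _ _
  have := Finset.sum_le_sum fun k (_ : k ∈ Finset.univ) => hamgm k
  rw [← Finset.mul_sum, Finset.sum_add_distrib, hcol hU, hcol hY] at this
  simp only [mul_apply, transpose_apply]
  linarith

lemma transpose_mul_self_mul_eq_one [Fintype n] [Fintype m] [DecidableEq m] [DecidableEq r]
    {Y : Matrix n m ℝ} {W : Matrix m r ℝ} (hY : Yᵀ * Y = 1) (hW : Wᵀ * W = 1) :
    (Y * W)ᵀ * (Y * W) = 1 := by
  rw [transpose_mul, Matrix.mul_assoc, ← Matrix.mul_assoc Yᵀ, hY, Matrix.one_mul, hW]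

theorem sum_castLE_le_trace_transpose_mul_diagonal_mul {n r : ℕ} (hrn : r ≤ n)
    {d : Fin n → ℝ} (hd : Monotone d) {Z : Matrix (Fin n) (Fin r) ℝ} (hZ : Zᵀ * Z = 1) :
    ∑ i : Fin r, d (Fin.castLE hrn i) ≤ (Zᵀ * diagonal d * Z).trace := by
  obtain ⟨c, hc⟩ := hd.exists_threshold_castLE hrn
  have htrace : (Zᵀ * diagonal d * Z).trace = ∑ k, d k * (Z * Zᵀ) k k := by
    rw [trace_mul_cycle, trace]
    simp only [diag_apply, mul_diagonal, mul_comm]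
  have hS : ∑ i : Fin r, d (Fin.castLE hrn i) =
      ∑ k ∈ Finset.univ.map (Fin.castLEEmb hrn), d k := by
    rw [Finset.sum_map]; rfl
  rw [htrace, hS]
  refine Finset.sum_le_sum_mul_of_threshold _ c (fun k hk => (hc k).1 ?_)
    (fun k hk => (hc k).2 ?_) (mul_transpose_self_diag_nonneg Z)
    (mul_transpose_self_diag_le_one hZ) ?_
  · exact (Fin.mem_map_castLEEmb_univ hrn k).1 hk
  · exact not_lt.1 (mt (Fin.mem_map_castLEEmb_univ hrn k).2 hk)
  · simp [sum_mul_transpose_self_diag hZ]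

lemma trace_transpose_mul_mul_of_mul_transpose_eq_one [Fintype m] [Fintype n] [DecidableEq n]
    {P : Matrix n m ℝ} (hP : P * Pᵀ = 1) (M : Matrix n n ℝ) : (Pᵀ * M * P).trace = M.trace := by
  rw [trace_mul_comm, ← Matrix.mul_assoc, hP, Matrix.one_mul]

theorem trace_transpose_mul_le_sum_of_svd [Fintype n] [Fintype m] [Fintype r] [DecidableEq m]
    [DecidableEq r] {U : Matrix n r ℝ} {W : Matrix m r ℝ} {s : r → ℝ} (hs : ∀ i, 0 ≤ s i)
    (hU : Uᵀ * U = 1) (hW : Wᵀ * W = 1) {Y : Matrix n m ℝ} (hY : Yᵀ * Y = 1) :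
    ((U * diagonal s * Wᵀ)ᵀ * Y).trace ≤ ∑ i, s i := by
  have htrace : ((U * diagonal s * Wᵀ)ᵀ * Y).trace = ∑ i, s i * (Uᵀ * (Y * W)) i i := by
    rw [transpose_mul, transpose_mul, transpose_transpose, diagonal_transpose, Matrix.mul_assoc,
      trace_mul_comm]
    simp only [Matrix.mul_assoc, trace, diag_apply, diagonal_mul]
  rw [htrace]
  refine Finset.sum_le_sum fun i _ => mul_le_of_le_one_right (hs i) ?_
  exact transpose_mul_apply_le_one hU (transpose_mul_self_mul_eq_one hY hW) i i

lemma trace_svd_transpose_mul_polar [Fintype n] [Fintype m] [Fintype r] [DecidableEq r]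
    {U : Matrix n r ℝ} {W : Matrix m r ℝ} (s : r → ℝ) (hU : Uᵀ * U = 1) (hW : Wᵀ * W = 1) :
    ((U * diagonal s * Wᵀ)ᵀ * (U * Wᵀ)).trace = ∑ i, s i := by
  have hconj : (U * diagonal s * Wᵀ)ᵀ * (U * Wᵀ) = Wᵀᵀ * diagonal s * Wᵀ := by
    simp only [transpose_mul, transpose_transpose, diagonal_transpose, Matrix.mul_assoc]
    rw [← Matrix.mul_assoc Uᵀ, hU, Matrix.one_mul]
  rw [hconj, trace_transpose_mul_mul_of_mul_transpose_eq_one (by rwa [transpose_transpose]),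
    trace_diagonal]

lemma transpose_submatrix_mul_mul_submatrix_of_eq_diagonal [Fintype n] [DecidableEq n]
    [DecidableEq r] {V A : Matrix n n ℝ} {d : n → ℝ} (hV : Vᵀ * V = 1)
    (hAV : A = V * diagonal d * Vᵀ) {e : r → n} (he : Function.Injective e) :
    (V.submatrix id e)ᵀ * A * V.submatrix id e = diagonal (d ∘ e) := by
  have hdiag : Vᵀ * A * V = diagonal d := by
    rw [hAV, ← Matrix.mul_assoc, ← Matrix.mul_assoc, hV, Matrix.one_mul, Matrix.mul_assoc, hV,
      Matrix.mul_one]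
  rw [← submatrix_diagonal d e he, ← hdiag, submatrix_mul _ _ _ id _ Function.bijective_id,
    submatrix_mul _ _ _ id _ Function.bijective_id, transpose_submatrix]
  rfl

end Matrix

theorem stmt9_general {n r : ℕ} (hrn : r ≤ n)
    (A : Matrix (Fin n) (Fin n) ℝ)
    (V : Matrix (Fin n) (Fin n) ℝ) (d : Fin n → ℝ) (hd : Monotone d)
    (hV : Vᵀ * V = 1) (hAV : A = V * Matrix.diagonal d * Vᵀ)
    (B UB : Matrix (Fin n) (Fin r) ℝ) (VB : Matrix (Fin r) (Fin r) ℝ)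
    (s : Fin r → ℝ) (hs : ∀ i, 0 < s i)
    (hUB : UBᵀ * UB = 1) (hVB : VBᵀ * VB = 1) (hVB' : VB * VBᵀ = 1)
    (hSVD : B = UB * Matrix.diagonal s * VBᵀ)
    (hspan : ∃ Q : Matrix (Fin r) (Fin r) ℝ, Qᵀ * Q = 1 ∧ Q * Qᵀ = 1 ∧
      UB = (V.submatrix id (Fin.castLE hrn)) * Q) :
    (UB * VBᵀ)ᵀ * (UB * VBᵀ) = 1 ∧
    (∀ Y : Matrix (Fin n) (Fin r) ℝ, Yᵀ * Y = 1 →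
      (1 / 2 : ℝ) * ((UB * VBᵀ)ᵀ * A * (UB * VBᵀ)).trace - (Bᵀ * (UB * VBᵀ)).trace ≤
        (1 / 2 : ℝ) * (Yᵀ * A * Y).trace - (Bᵀ * Y).trace) ∧
    (∀ Y : Matrix (Fin n) (Fin r) ℝ, Yᵀ * Y = 1 →
      (1 / 2 : ℝ) * (∑ i : Fin r, d (Fin.castLE hrn i)) - (∑ i : Fin r, s i) ≤
        (1 / 2 : ℝ) * (Yᵀ * A * Y).trace - (Bᵀ * Y).trace) ∧
    (1 / 2 : ℝ) * ((UB * VBᵀ)ᵀ * A * (UB * VBᵀ)).trace - (Bᵀ * (UB * VBᵀ)).trace =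
      (1 / 2 : ℝ) * (∑ i : Fin r, d (Fin.castLE hrn i)) - (∑ i : Fin r, s i) := by
  obtain ⟨Q, -, hQ, hUBQ⟩ := hspan
  have hX : (UB * VBᵀ)ᵀ * (UB * VBᵀ) = 1 :=
    transpose_mul_self_mul_eq_one hUB (by rwa [transpose_transpose])
  have hXAX : ((UB * VBᵀ)ᵀ * A * (UB * VBᵀ)).trace = ∑ i : Fin r, d (Fin.castLE hrn i) := by
    have hconj : (UB * VBᵀ)ᵀ * A * (UB * VBᵀ) = VBᵀᵀ * (Qᵀ *
        ((V.submatrix id (Fin.castLE hrn))ᵀ * A * V.submatrix id (Fin.castLE hrn)) * Q) * VBᵀ := by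
      simp only [hUBQ, transpose_mul, Matrix.mul_assoc]
    rw [hconj, trace_transpose_mul_mul_of_mul_transpose_eq_one (by rwa [transpose_transpose]),
      trace_transpose_mul_mul_of_mul_transpose_eq_one hQ,
      transpose_submatrix_mul_mul_submatrix_of_eq_diagonal hV hAV (Fin.castLE_injective hrn),
      trace_diagonal]
    rfl
  have hBX : (Bᵀ * (UB * VBᵀ)).trace = ∑ i, s i := by
    rw [hSVD, trace_svd_transpose_mul_polar s hUB hVB]
  have hlower : ∀ Y : Matrix (Fin n) (Fin r) ℝ, Yᵀ * Y = 1 →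
      (1 / 2 : ℝ) * (∑ i : Fin r, d (Fin.castLE hrn i)) - (∑ i : Fin r, s i) ≤
        (1 / 2 : ℝ) * (Yᵀ * A * Y).trace - (Bᵀ * Y).trace := by
    intro Y hY
    have hYAY : Yᵀ * A * Y = (Vᵀ * Y)ᵀ * diagonal d * (Vᵀ * Y) := by
      simp only [hAV, transpose_mul, transpose_transpose, Matrix.mul_assoc]
    have hkyfan := sum_castLE_le_trace_transpose_mul_diagonal_mul hrn hd
      (transpose_mul_self_mul_eq_one (by rwa [transpose_transpose, mul_eq_one_comm]) hY)
    have hnuclear : (Bᵀ * Y).trace ≤ ∑ i, s i := by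
      rw [hSVD]; exact trace_transpose_mul_le_sum_of_svd (fun i => (hs i).le) hUB hVB hY
    rw [hYAY]
    linarith
  refine ⟨hX, fun Y hY => ?_, hlower, by rw [hXAX, hBX]⟩
  rw [hXAX, hBX]
  exact hlower Y hY

/-- if `C = I` and the left singular vectors `U_B` of the rank-`r` matrix
`B = U_B D_B V_Bᵀ` span the same space as the ground eigenvectors `V_g` of `A`, then the
polar factor `X = U_B V_Bᵀ` is a global minimizer of `f(X) = ½ tr(XᵀAX) − tr(BᵀX)` over
`St(n,r)`, the lower bound `f(Y) ≥ ½(d₁+⋯+d_r) − ‖B‖_*` holds for all `Y ∈ St(n,r)`,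
and equality is attained at `X`. -/
theorem stmt9 {n r : ℕ} (hr0 : 0 < r) (hrn : r ≤ n)
    (A : Matrix (Fin n) (Fin n) ℝ) (hA : A.IsSymm)
    (V : Matrix (Fin n) (Fin n) ℝ) (d : Fin n → ℝ) (hd : Monotone d)
    (hV : Vᵀ * V = 1) (hAV : A = V * Matrix.diagonal d * Vᵀ)
    (B UB : Matrix (Fin n) (Fin r) ℝ) (VB : Matrix (Fin r) (Fin r) ℝ)
    (s : Fin r → ℝ) (hs : ∀ i, 0 < s i)
    (hUB : UBᵀ * UB = 1) (hVB : VBᵀ * VB = 1) (hVB' : VB * VBᵀ = 1)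
    (hSVD : B = UB * Matrix.diagonal s * VBᵀ)
    (hspan : ∃ Q : Matrix (Fin r) (Fin r) ℝ, Qᵀ * Q = 1 ∧ Q * Qᵀ = 1 ∧
      UB = (V.submatrix id (Fin.castLE hrn)) * Q) :
    (UB * VBᵀ)ᵀ * (UB * VBᵀ) = 1 ∧
    (∀ Y : Matrix (Fin n) (Fin r) ℝ, Yᵀ * Y = 1 →
      (1 / 2 : ℝ) * ((UB * VBᵀ)ᵀ * A * (UB * VBᵀ)).trace - (Bᵀ * (UB * VBᵀ)).trace ≤
        (1 / 2 : ℝ) * (Yᵀ * A * Y).trace - (Bᵀ * Y).trace) ∧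
    (∀ Y : Matrix (Fin n) (Fin r) ℝ, Yᵀ * Y = 1 →
      (1 / 2 : ℝ) * (∑ i : Fin r, d (Fin.castLE hrn i)) - (∑ i : Fin r, s i) ≤
        (1 / 2 : ℝ) * (Yᵀ * A * Y).trace - (Bᵀ * Y).trace) ∧
    (1 / 2 : ℝ) * ((UB * VBᵀ)ᵀ * A * (UB * VBᵀ)).trace - (Bᵀ * (UB * VBᵀ)).trace =
      (1 / 2 : ℝ) * (∑ i : Fin r, d (Fin.castLE hrn i)) - (∑ i : Fin r, s i) :=
  stmt9_general hrn A V d hd hV hAV B UB VB s hs hUB hVB hVB' hSVD hspan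
end

section
/- Let D = Ã − A ⪰ 0 and C ≻ 0, and define the regularized model at base point X_k ∈ St(n,r): f_k(X) = ½ tr(XᵀÃXC) − tr(B_kᵀX) + ½ tr(X_kᵀ D X_k C) with B_k = B + D X_k C. Then for every X ∈ St(n,r), f_k(X) − f(X) = ½ tr((X_k − X)ᵀ D (X_k − X) C) ≥ 0, and f_k(X_k) = f(X_k), where f(X) = ½ tr(XᵀAXC) − tr(BᵀX). -/
open Matrix

private lemma tr_transpose_mul_self_nonneg {m k : ℕ} (P : Matrix (Fin m) (Fin k) ℝ) :
    0 ≤ (Pᵀ * P).trace := by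
  rw [Matrix.trace]
  refine Finset.sum_nonneg fun i _ => ?_
  rw [Matrix.diag_apply, Matrix.mul_apply]
  exact Finset.sum_nonneg fun j _ => by
    simp only [Matrix.transpose_apply]; exact mul_self_nonneg _

private lemma tr_quad_nonneg {m k : ℕ} {D : Matrix (Fin m) (Fin m) ℝ}
    {C : Matrix (Fin k) (Fin k) ℝ} (hD : D.PosSemidef) (hC : C.PosSemidef)
    (N : Matrix (Fin m) (Fin k) ℝ) : 0 ≤ (Nᵀ * D * N * C).trace := by
  obtain ⟨L1, rfl⟩ := (by open scoped MatrixOrder in exact CStarAlgebra.nonneg_iff_eq_star_mul_self.mp hD.nonneg :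
    ∃ L : Matrix (Fin m) (Fin m) ℝ, D = Lᴴ * L)
  obtain ⟨L2, rfl⟩ := (by open scoped MatrixOrder in exact CStarAlgebra.nonneg_iff_eq_star_mul_self.mp hC.nonneg :
    ∃ L : Matrix (Fin k) (Fin k) ℝ, C = Lᴴ * L)
  have h1 : L1ᴴ = L1ᵀ := by ext i j; simp [Matrix.conjTranspose_apply]
  have h2 : L2ᴴ = L2ᵀ := by ext i j; simp [Matrix.conjTranspose_apply]
  rw [h1, h2]
  have hm : ((L1 * N * L2ᵀ)ᵀ * (L1 * N * L2ᵀ))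
      = L2 * (Nᵀ * (L1ᵀ * L1) * N) * L2ᵀ := by
    simp [Matrix.transpose_mul, Matrix.mul_assoc]
  have h : (Nᵀ * (L1ᵀ * L1) * N * (L2ᵀ * L2)).trace
      = ((L1 * N * L2ᵀ)ᵀ * (L1 * N * L2ᵀ)).trace := by
    rw [hm, show Nᵀ * (L1ᵀ * L1) * N * (L2ᵀ * L2)
        = (Nᵀ * (L1ᵀ * L1) * N * L2ᵀ) * L2 by simp [Matrix.mul_assoc],
      Matrix.trace_mul_comm]
    simp [Matrix.mul_assoc]
  rw [h]
  exact tr_transpose_mul_self_nonneg _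

/-- with `D = Ã − A ⪰ 0`, `C ≻ 0` and
`f_k(X) = ½ tr(XᵀÃXC) − tr(B_kᵀX) + ½ tr(X_kᵀDX_kC)` where `B_k = B + DX_kC`, one has
`f_k(X) − f(X) = ½ tr((X_k−X)ᵀD(X_k−X)C) ≥ 0` for all `X ∈ St(n,r)`, and
`f_k(X_k) = f(X_k)`. -/
theorem stmt15 {n r : ℕ}
    (A Atil : Matrix (Fin n) (Fin n) ℝ) (hA : A.IsSymm) (hAtil : Atil.IsSymm)
    (hD : (Atil - A).PosSemidef)
    (B : Matrix (Fin n) (Fin r) ℝ)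
    (C : Matrix (Fin r) (Fin r) ℝ) (hC : C.PosDef)
    (Xk : Matrix (Fin n) (Fin r) ℝ) (hXk : Xkᵀ * Xk = 1)
    (f fk : Matrix (Fin n) (Fin r) ℝ → ℝ)
    (hf : f = fun X => (1 / 2 : ℝ) * (Xᵀ * A * X * C).trace - (Bᵀ * X).trace)
    (hfk : fk = fun X => (1 / 2 : ℝ) * (Xᵀ * Atil * X * C).trace -
      ((B + (Atil - A) * Xk * C)ᵀ * X).trace +
      (1 / 2 : ℝ) * (Xkᵀ * (Atil - A) * Xk * C).trace) :
    (∀ X : Matrix (Fin n) (Fin r) ℝ, Xᵀ * X = 1 →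
      fk X - f X = (1 / 2 : ℝ) * ((Xk - X)ᵀ * (Atil - A) * (Xk - X) * C).trace ∧
        0 ≤ fk X - f X) ∧
    fk Xk = f Xk := by
  subst hf hfk
  set D := Atil - A with hDdef
  have hDsymm : Dᵀ = D := hD.1
  have hCsymm : Cᵀ = C := hC.1
  have key : ∀ X : Matrix (Fin n) (Fin r) ℝ,
      ((1 / 2 : ℝ) * (Xᵀ * Atil * X * C).trace -
        ((B + D * Xk * C)ᵀ * X).trace +
        (1 / 2 : ℝ) * (Xkᵀ * D * Xk * C).trace) -
      ((1 / 2 : ℝ) * (Xᵀ * A * X * C).trace - (Bᵀ * X).trace)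
      = (1 / 2 : ℝ) * ((Xk - X)ᵀ * D * (Xk - X) * C).trace := by
    intro X
    have hcross : ((D * Xk * C)ᵀ * X).trace = (Xᵀ * D * Xk * C).trace := by
      rw [← Matrix.trace_transpose (Xᵀ * D * Xk * C)]
      simp [Matrix.transpose_mul, hDsymm, hCsymm, Matrix.mul_assoc]
    have hcross2 : (Xkᵀ * D * X * C).trace = (Xᵀ * D * Xk * C).trace := by
      rw [← Matrix.trace_transpose (Xᵀ * D * Xk * C)]
      simp only [Matrix.transpose_mul, Matrix.transpose_transpose, hDsymm, hCsymm]
      rw [Matrix.trace_mul_comm]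
      simp [Matrix.mul_assoc]
    have hAtilD : (Xᵀ * Atil * X * C).trace
        = (Xᵀ * D * X * C).trace + (Xᵀ * A * X * C).trace := by
      simp [hDdef, Matrix.mul_sub, Matrix.sub_mul, Matrix.trace_sub]
    simp only [Matrix.transpose_add, Matrix.add_mul, Matrix.trace_add,
      Matrix.sub_mul, Matrix.mul_sub, Matrix.transpose_sub, Matrix.trace_sub,
      hAtilD, hcross, hcross2]
    ring
  refine ⟨fun X _ => ⟨key X, ?_⟩, ?_⟩
  · rw [key X]
    have := tr_quad_nonneg hD hC.posSemidef (Xk - X)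
    linarith
  · have h := key Xk
    simp only [sub_self, Matrix.zero_mul, Matrix.mul_zero, Matrix.trace_zero,
      mul_zero] at h
    linarith [h]
end

section
/- Let Ã be the regularized matrix with d₁ = … = d_r (r smallest eigenvalues equal to d_r) and eigenvector matrix V_g. Consider min f(X; Ã, V_gV_gᵀB, C) over St(n,r). Then X = P_M(V_gV_gᵀB) (polar factor) is a global minimizer, and its multiplier Λ = Xᵀ(ÃXC − V_gV_gᵀB) satisfies Λ ⪯ d_r C. -/
open Matrix

private lemma trace_nonneg_of_posSemidef {m : Type*} [Fintype m] {A : Matrix m m ℝ}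
    (h : A.PosSemidef) : 0 ≤ A.trace := by
  classical
  obtain ⟨S, rfl⟩ : ∃ S : Matrix m m ℝ, A = Sᴴ * S := by
    open scoped MatrixOrder in
    obtain ⟨S, hS⟩ := CStarAlgebra.nonneg_iff_eq_star_mul_self.mp h.nonneg
    exact ⟨S, hS⟩
  rw [Matrix.trace]
  refine Finset.sum_nonneg fun i _ => ?_
  simp only [Matrix.diag_apply, Matrix.mul_apply, Matrix.conjTranspose_apply, star_trivial]
  exact Finset.sum_nonneg fun k _ => mul_self_nonneg _

private lemma trace_mul_nonneg_of_posSemidef {m : Type*} [Fintype m] [DecidableEq m]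
    {A B : Matrix m m ℝ} (hA : A.PosSemidef) (hB : B.PosSemidef) : 0 ≤ (A * B).trace := by
  obtain ⟨S, rfl⟩ : ∃ S : Matrix m m ℝ, A = Sᴴ * S := by
    open scoped MatrixOrder in
    obtain ⟨S, hS⟩ := CStarAlgebra.nonneg_iff_eq_star_mul_self.mp hA.nonneg
    exact ⟨S, hS⟩
  rw [Matrix.mul_assoc, Matrix.trace_mul_comm]
  exact trace_nonneg_of_posSemidef (hB.mul_mul_conjTranspose_same S)

/-- for the regularized matrix `Ã` whose `r` smallest eigenvalues all equal
`d_r` with eigenspace spanned by `V_g ∈ St(n,r)`, the polar factor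
`X = (V_gV_gᵀB)((V_gV_gᵀB)ᵀ(V_gV_gᵀB))^{-1/2}` is a global minimizer of
`f(X) = ½ tr(XᵀÃXC) − tr((V_gV_gᵀB)ᵀX)` over `St(n,r)`, and its multiplier
`Λ = Xᵀ(ÃXC − V_gV_gᵀB)` satisfies `Λ ⪯ d_rC`. -/
theorem stmt17 {n r : ℕ}
    (Atil : Matrix (Fin n) (Fin n) ℝ) (hAtil : Atil.IsSymm)
    (dr : ℝ)
    (Vg : Matrix (Fin n) (Fin r) ℝ) (hVg : Vgᵀ * Vg = 1)
    (hEig : Atil * Vg = dr • Vg)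
    (hMin : (Atil - dr • (1 : Matrix (Fin n) (Fin n) ℝ)).PosSemidef)
    (hSpan : ∀ v : Fin n → ℝ, Atil.mulVec v = dr • v → ∃ c : Fin r → ℝ, v = Vg.mulVec c)
    (B : Matrix (Fin n) (Fin r) ℝ)
    (C : Matrix (Fin r) (Fin r) ℝ) (hC : C.PosDef)
    -- `W = ((V_gV_gᵀB)ᵀ(V_gV_gᵀB))^{1/2}`; `W` is invertible since `V_gᵀB` has rank `r`
    (W : Matrix (Fin r) (Fin r) ℝ) (hW : W.PosDef)
    (hWsq : W * W = (Vg * Vgᵀ * B)ᵀ * (Vg * Vgᵀ * B))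
    (X : Matrix (Fin n) (Fin r) ℝ) (hXdef : X = Vg * Vgᵀ * B * W⁻¹) :
    Xᵀ * X = 1 ∧
    (∀ Y : Matrix (Fin n) (Fin r) ℝ, Yᵀ * Y = 1 →
      (1 / 2 : ℝ) * (Xᵀ * Atil * X * C).trace - ((Vg * Vgᵀ * B)ᵀ * X).trace ≤
        (1 / 2 : ℝ) * (Yᵀ * Atil * Y * C).trace - ((Vg * Vgᵀ * B)ᵀ * Y).trace) ∧
    (dr • C - Xᵀ * (Atil * X * C - Vg * Vgᵀ * B)).PosSemidef := by
  set Bt := Vg * Vgᵀ * B with hBtdef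
  have hWT : Wᵀ = W := by
    have h := hW.isHermitian.eq
    rwa [Matrix.conjTranspose_eq_transpose_of_trivial] at h
  have hdet : IsUnit W.det := isUnit_iff_ne_zero.mpr hW.det_pos.ne'
  have hWiW : W⁻¹ * W = 1 := W.nonsing_inv_mul hdet
  have hWWi : W * W⁻¹ = 1 := W.mul_nonsing_inv hdet
  have hWiT : W⁻¹ᵀ = W⁻¹ := by rw [Matrix.transpose_nonsing_inv, hWT]
  have hAB : Atil * Bt = dr • Bt := by
    rw [hBtdef, ← Matrix.mul_assoc, ← Matrix.mul_assoc, hEig, Matrix.smul_mul, Matrix.smul_mul]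
  have hXT : Xᵀ = W⁻¹ * Btᵀ := by rw [hXdef, Matrix.transpose_mul, hWiT]
  have key : Btᵀ * (Bt * W⁻¹) = W := by
    rw [← Matrix.mul_assoc, ← hWsq, Matrix.mul_assoc, hWWi, Matrix.mul_one]
  have hXX : Xᵀ * X = 1 := by rw [hXT, hXdef, Matrix.mul_assoc, key, hWiW]
  have hXW : X * W = Bt := by rw [hXdef, Matrix.mul_assoc, hWiW, Matrix.mul_one]
  have hXBt : Xᵀ * Bt = W := by
    rw [hXT, Matrix.mul_assoc, ← hWsq, ← Matrix.mul_assoc, hWiW, Matrix.one_mul]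
  have hBtX : Btᵀ * X = W := by rw [hXdef]; exact key
  have hAX : Atil * X = dr • X := by
    rw [hXdef, ← Matrix.mul_assoc, hAB, Matrix.smul_mul]
  refine ⟨hXX, ?_, ?_⟩
  · intro Y hY
    -- value at X
    have hfX : (Xᵀ * Atil * X * C).trace = dr * C.trace := by
      have h1 : Xᵀ * Atil * X = dr • (1 : Matrix (Fin r) (Fin r) ℝ) := by
        rw [Matrix.mul_assoc, hAX, Matrix.mul_smul, hXX]
      rw [h1, Matrix.smul_mul, Matrix.trace_smul, Matrix.one_mul, smul_eq_mul]
    -- quadratic part at Y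
    have hPSD1 : (Yᵀ * (Atil - dr • (1 : Matrix (Fin n) (Fin n) ℝ)) * Y).PosSemidef := by
      have h := hMin.conjTranspose_mul_mul_same Y
      rwa [Matrix.conjTranspose_eq_transpose_of_trivial] at h
    have ht1 : 0 ≤ ((Yᵀ * (Atil - dr • (1 : Matrix (Fin n) (Fin n) ℝ)) * Y) * C).trace :=
      trace_mul_nonneg_of_posSemidef hPSD1 hC.posSemidef
    have hexp : ((Yᵀ * (Atil - dr • (1 : Matrix (Fin n) (Fin n) ℝ)) * Y) * C).trace
        = (Yᵀ * Atil * Y * C).trace - dr * C.trace := by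
      have e : Yᵀ * (Atil - dr • (1 : Matrix (Fin n) (Fin n) ℝ)) * Y
          = Yᵀ * Atil * Y - dr • (1 : Matrix (Fin r) (Fin r) ℝ) := by
        rw [Matrix.mul_sub, Matrix.sub_mul, Matrix.mul_smul, Matrix.mul_one,
          Matrix.smul_mul, hY]
      rw [e, Matrix.sub_mul, Matrix.trace_sub, Matrix.smul_mul, Matrix.trace_smul,
        Matrix.one_mul, smul_eq_mul]
    -- linear part at Y
    set M := Xᵀ * Y with hMdef
    have hBtY : Btᵀ * Y = W * M := by
      have h : Btᵀ = W * Xᵀ := by rw [← hXW, Matrix.transpose_mul, hWT]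
      rw [h, Matrix.mul_assoc, hMdef]
    set K := (1 : Matrix (Fin r) (Fin r) ℝ) - (2⁻¹ : ℝ) • (M + Mᵀ) with hKdef
    have hK : K.PosSemidef := by
      refine Matrix.PosSemidef.of_dotProduct_mulVec_nonneg ?_ ?_
      · rw [Matrix.IsHermitian, Matrix.conjTranspose_eq_transpose_of_trivial, hKdef]
        rw [Matrix.transpose_sub, Matrix.transpose_smul, Matrix.transpose_add,
          Matrix.transpose_one, Matrix.transpose_transpose, add_comm]
      · intro x
        have hsx : star x = x := by simp
        have hMx : x ⬝ᵥ (M *ᵥ x) ≤ x ⬝ᵥ x := by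
          have hMx2 : M *ᵥ x = Xᵀ *ᵥ (Y *ᵥ x) := by rw [hMdef, ← Matrix.mulVec_mulVec]
          have hxm : x ⬝ᵥ (Xᵀ *ᵥ (Y *ᵥ x)) = (X *ᵥ x) ⬝ᵥ (Y *ᵥ x) := by
            rw [Matrix.dotProduct_mulVec, Matrix.vecMul_transpose]
          have hzz : (X *ᵥ x) ⬝ᵥ (X *ᵥ x) = x ⬝ᵥ x := by
            rw [Matrix.dotProduct_mulVec, ← Matrix.vecMul_transpose, Matrix.vecMul_vecMul,
              hXX, Matrix.vecMul_one]
          have hww : (Y *ᵥ x) ⬝ᵥ (Y *ᵥ x) = x ⬝ᵥ x := by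
            rw [Matrix.dotProduct_mulVec, ← Matrix.vecMul_transpose, Matrix.vecMul_vecMul,
              hY, Matrix.vecMul_one]
          set z := X *ᵥ x with hz
          set w := Y *ᵥ x with hw
          have hpos : 0 ≤ (z - w) ⬝ᵥ (z - w) := by
            refine Finset.sum_nonneg fun i _ => mul_self_nonneg _
          have hexp2 : (z - w) ⬝ᵥ (z - w) = z ⬝ᵥ z - 2 * (z ⬝ᵥ w) + w ⬝ᵥ w := by
            rw [sub_dotProduct, dotProduct_sub, dotProduct_sub,
              dotProduct_comm w z]
            ring
          rw [hMx2, hxm]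
          nlinarith [hpos, hexp2, hzz, hww]
        have hMTx : x ⬝ᵥ (Mᵀ *ᵥ x) = x ⬝ᵥ (M *ᵥ x) := by
          rw [Matrix.mulVec_transpose, dotProduct_comm, ← Matrix.dotProduct_mulVec]
        rw [hsx, hKdef]
        rw [Matrix.sub_mulVec, Matrix.smul_mulVec, Matrix.add_mulVec,
          Matrix.one_mulVec, dotProduct_sub, dotProduct_smul,
          dotProduct_add, hMTx]
        simp only [smul_eq_mul]
        linarith [hMx]
    have hWK : 0 ≤ (W * K).trace := trace_mul_nonneg_of_posSemidef hW.posSemidef hK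
    have hWMT : (W * Mᵀ).trace = (W * M).trace := by
      rw [← Matrix.trace_transpose, Matrix.transpose_mul, Matrix.transpose_transpose, hWT,
        Matrix.trace_mul_comm]
    have htr : (W * K).trace = W.trace - (W * M).trace := by
      rw [hKdef, Matrix.mul_sub, Matrix.mul_one, Matrix.mul_smul, Matrix.mul_add,
        Matrix.trace_sub, Matrix.trace_smul, Matrix.trace_add, hWMT, smul_eq_mul]
      ring
    have hlin : (Btᵀ * Y).trace ≤ W.trace := by
      rw [hBtY]; linarith [hWK, htr]
    rw [hfX, hBtX]
    linarith [ht1, hlin, hexp]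
  · have h3 : dr • C - Xᵀ * (Atil * X * C - Bt) = W := by
      have h1 : Xᵀ * (Atil * X * C) = dr • C := by
        rw [hAX, Matrix.smul_mul, Matrix.mul_smul, ← Matrix.mul_assoc, hXX, Matrix.one_mul]
      rw [Matrix.mul_sub, h1, hXBt, sub_sub_cancel]
    rw [h3]
    exact hW.posSemidef
end

section
/- Suppose V_gᵀBC⁻¹ = 0 and the spectral norm bound ‖(Ã − d₁I)† (BC⁻¹)‖₂ ≤ 1 holds, where Ã has its r smallest eigenvalues all equal to d₁. Then for any U ∈ ℝʳˣʳ satisfying UᵀU = I − C⁻¹Bᵀ((Ã−d₁I)†)ᵀ(Ã−d₁I)†BC⁻¹, the matrix X = V_gU + (Ã−d₁I)†BC⁻¹ lies in St(n,r) and satisfies the first-order condition ÃXC − B = XΛ with Λ = d₁C. -/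
/-!
Put `M = Ã - d₁I`, so that `ker M = span V_g`, and `W = G B C⁻¹`. The Penrose identities give
`G = G M G = (G M)ᵀ G = M Gᵀ G`, so the rows of `G` are orthogonal to `ker M`: `V_gᵀ W = 0`,
hence `XᵀX = UᵀU + WᵀW = I`. They also give `M (B - M G B) = 0` (as `M G` is symmetric and
`M G M = M`), while `B - M G B` is orthogonal to `V_g`, because `B` is and `V_gᵀ M = 0`; a vector
in `ker M` orthogonal to `ker M` vanishes, so `M G B = B`. With `M V_g = 0` this yields
`M X C = M G B = B`, which is the first-order condition `Ã X C - B = d₁ X C`.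
-/

open Matrix

namespace Matrix

variable {R : Type*} [CommRing R] {m n k l : Type*}

theorem transpose_mul_pinv_eq_zero [Fintype m] [Fintype n] {M : Matrix m n R} {G : Matrix n m R}
    {V : Matrix n k R}
    (hG2 : G * M * G = G) (hG4 : (G * M)ᵀ = G * M) (hMV : M * V = 0) : Vᵀ * G = 0 :=
  calc Vᵀ * G = Vᵀ * ((G * M)ᵀ * G) := by rw [hG4, hG2]
    _ = (M * V)ᵀ * (Gᵀ * G) := by simp only [transpose_mul, Matrix.mul_assoc]
    _ = 0 := by rw [hMV, transpose_zero, Matrix.zero_mul]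

theorem eq_zero_of_mul_eq_zero_of_transpose_mul_eq_zero [Fintype n] [Fintype k] [Fintype l]
    [DecidableEq k] {M : Matrix m n R} {V : Matrix n k R} {K : Matrix n l R}
    (hker : ∀ v, M *ᵥ v = 0 → ∃ c, v = V *ᵥ c) (hV : Vᵀ * V = 1)
    (hMK : M * K = 0) (hVK : Vᵀ * K = 0) : K = 0 := by
  rw [ext_iff_mulVec]
  intro v
  obtain ⟨c, hc⟩ := hker (K *ᵥ v) (by rw [mulVec_mulVec, hMK, zero_mulVec])
  have hc0 : c = 0 := by
    rw [← one_mulVec c, ← hV, ← mulVec_mulVec, ← hc, mulVec_mulVec, hVK, zero_mulVec]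
  rw [hc, hc0, mulVec_zero, zero_mulVec]

theorem mul_pinv_mul_eq_self [Fintype m] [Fintype n] [Fintype k] [Fintype l] [DecidableEq k]
    {M : Matrix m n R} {G : Matrix n m R} {V : Matrix m k R} {B : Matrix m l R}
    (hker : ∀ v, Mᵀ *ᵥ v = 0 → ∃ c, v = V *ᵥ c) (hV : Vᵀ * V = 1) (hVM : Vᵀ * M = 0)
    (hG1 : M * G * M = M) (hG3 : (M * G)ᵀ = M * G) (hVB : Vᵀ * B = 0) : M * G * B = B := by
  have hMMG : Mᵀ * (M * G) = Mᵀ := by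
    rw [← hG3, ← transpose_mul, hG1]
  refine (sub_eq_zero.mp (eq_zero_of_mul_eq_zero_of_transpose_mul_eq_zero hker hV ?_ ?_)).symm
  · rw [Matrix.mul_sub, ← Matrix.mul_assoc, hMMG, sub_self]
  · rw [Matrix.mul_sub, hVB, ← Matrix.mul_assoc, ← Matrix.mul_assoc, hVM, Matrix.zero_mul,
      Matrix.zero_mul, sub_self]

theorem transpose_mul_self_eq_one_of_transpose_mul_eq_zero [Fintype n] [Fintype k]
    [DecidableEq k] [DecidableEq l]
    {V : Matrix n k R} {U : Matrix k l R} {W : Matrix n l R}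
    (hV : Vᵀ * V = 1) (hVW : Vᵀ * W = 0) (hU : Uᵀ * U = 1 - Wᵀ * W) :
    (V * U + W)ᵀ * (V * U + W) = 1 := by
  have hWV : Wᵀ * V = 0 := by
    rw [← transpose_transpose V, ← transpose_mul, hVW, transpose_zero]
  calc (V * U + W)ᵀ * (V * U + W)
      = Uᵀ * (Vᵀ * V) * U + Uᵀ * (Vᵀ * W) + Wᵀ * V * U + Wᵀ * W := by
        simp only [transpose_add, transpose_mul, Matrix.add_mul, Matrix.mul_add, Matrix.mul_assoc]
        abel
    _ = 1 := by
        rw [hV, hVW, hWV, Matrix.mul_one, hU, Matrix.mul_zero, Matrix.zero_mul, add_zero,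
          add_zero, sub_add_cancel]

end Matrix

theorem stmt18_general {n r : ℕ}
    (Atil : Matrix (Fin n) (Fin n) ℝ) (hAtil : Atil.IsSymm)
    (d1 : ℝ)
    (Vg : Matrix (Fin n) (Fin r) ℝ) (hVg : Vgᵀ * Vg = 1)
    (hEig : Atil * Vg = d1 • Vg)
    (hSpan : ∀ v : Fin n → ℝ, Atil.mulVec v = d1 • v → ∃ c : Fin r → ℝ, v = Vg.mulVec c)
    (B : Matrix (Fin n) (Fin r) ℝ)
    (C : Matrix (Fin r) (Fin r) ℝ) (hC : C.PosDef)
    -- `G` is the Moore–Penrose pseudoinverse of `M := Ã − d₁I` (Penrose conditions)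
    (G : Matrix (Fin n) (Fin n) ℝ)
    (hG1 : (Atil - d1 • 1) * G * (Atil - d1 • 1) = Atil - d1 • 1)
    (hG2 : G * (Atil - d1 • 1) * G = G)
    (hG3 : ((Atil - d1 • 1) * G)ᵀ = (Atil - d1 • 1) * G)
    (hG4 : (G * (Atil - d1 • 1))ᵀ = G * (Atil - d1 • 1))
    (hdeg : Vgᵀ * B * C⁻¹ = 0) :
    ∀ U : Matrix (Fin r) (Fin r) ℝ,
      Uᵀ * U = (1 : Matrix (Fin r) (Fin r) ℝ) -
          C⁻¹ * Bᵀ * Gᵀ * G * B * C⁻¹ →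
      (Vg * U + G * B * C⁻¹)ᵀ * (Vg * U + G * B * C⁻¹) = 1 ∧
        Atil * (Vg * U + G * B * C⁻¹) * C - B =
          (Vg * U + G * B * C⁻¹) * (d1 • C) := by
  intro U hU
  set M := Atil - d1 • (1 : Matrix (Fin n) (Fin n) ℝ) with hM
  have hMT : Mᵀ = M := by rw [hM, transpose_sub, transpose_smul, transpose_one, hAtil.eq]
  have hMVg : M * Vg = 0 := by
    rw [hM, Matrix.sub_mul, hEig, Matrix.smul_mul, Matrix.one_mul, sub_self]
  have hVgM : Vgᵀ * M = 0 := by rw [← hMT, ← transpose_mul, hMVg, transpose_zero]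
  have hker : ∀ v, Mᵀ *ᵥ v = 0 → ∃ c, v = Vg *ᵥ c := fun v hv ↦ hSpan v <| by
    rwa [hMT, hM, sub_mulVec, smul_mulVec, one_mulVec, sub_eq_zero] at hv
  have hCC : C⁻¹ * C = 1 := nonsing_inv_mul C (isUnit_iff_ne_zero.mpr hC.det_pos.ne')
  have hVgB : Vgᵀ * B = 0 := by simpa [Matrix.mul_assoc, hCC] using congrArg (· * C) hdeg
  have hMGB : M * G * B = B := mul_pinv_mul_eq_self hker hVg hVgM hG1 hG3 hVgB
  refine ⟨transpose_mul_self_eq_one_of_transpose_mul_eq_zero hVg ?_ ?_, ?_⟩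
  · simp only [← Matrix.mul_assoc, transpose_mul_pinv_eq_zero hG2 hG4 hMVg, Matrix.zero_mul]
  · have hCinvT : C⁻¹ᵀ = C⁻¹ := (isHermitian_iff_isSymm.mp hC.inv.isHermitian).eq
    rw [hU]
    simp only [transpose_mul, hCinvT, Matrix.mul_assoc]
  · have hFOC : M * (Vg * U + G * B * C⁻¹) * C = B := by
      rw [Matrix.mul_add, ← Matrix.mul_assoc M Vg, hMVg, Matrix.zero_mul, zero_add,
        ← Matrix.mul_assoc, ← Matrix.mul_assoc, hMGB, Matrix.mul_assoc, hCC, Matrix.mul_one]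
    generalize Vg * U + G * B * C⁻¹ = X at hFOC ⊢
    rw [← hFOC, hM]
    simp only [Matrix.sub_mul, Matrix.smul_mul, Matrix.one_mul, Matrix.mul_smul]
    abel

/-- in the degenerate case `V_gᵀBC⁻¹ = 0` with the spectral-norm bound
`‖(Ã−d₁I)†(BC⁻¹)‖₂ ≤ 1` (here `G` denotes the Moore–Penrose pseudoinverse of `Ã−d₁I`,
characterized by the four Penrose conditions), any `U` with
`UᵀU = I − C⁻¹Bᵀ(G)ᵀG BC⁻¹` yields `X = V_gU + G BC⁻¹ ∈ St(n,r)` satisfying the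
first-order condition `ÃXC − B = XΛ` with `Λ = d₁C`. -/
theorem stmt18 {n r : ℕ}
    (Atil : Matrix (Fin n) (Fin n) ℝ) (hAtil : Atil.IsSymm)
    (d1 : ℝ)
    (Vg : Matrix (Fin n) (Fin r) ℝ) (hVg : Vgᵀ * Vg = 1)
    (hEig : Atil * Vg = d1 • Vg)
    (hMin : (Atil - d1 • (1 : Matrix (Fin n) (Fin n) ℝ)).PosSemidef)
    (hSpan : ∀ v : Fin n → ℝ, Atil.mulVec v = d1 • v → ∃ c : Fin r → ℝ, v = Vg.mulVec c)
    (B : Matrix (Fin n) (Fin r) ℝ)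
    (C : Matrix (Fin r) (Fin r) ℝ) (hC : C.PosDef)
    -- `G` is the Moore–Penrose pseudoinverse of `M := Ã − d₁I` (Penrose conditions)
    (G : Matrix (Fin n) (Fin n) ℝ)
    (hG1 : (Atil - d1 • 1) * G * (Atil - d1 • 1) = Atil - d1 • 1)
    (hG2 : G * (Atil - d1 • 1) * G = G)
    (hG3 : ((Atil - d1 • 1) * G)ᵀ = (Atil - d1 • 1) * G)
    (hG4 : (G * (Atil - d1 • 1))ᵀ = G * (Atil - d1 • 1))
    (hdeg : Vgᵀ * B * C⁻¹ = 0)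
    -- spectral norm bound `‖G(BC⁻¹)‖₂ ≤ 1`
    (hnorm : ((1 : Matrix (Fin r) (Fin r) ℝ) -
      (G * B * C⁻¹)ᵀ * (G * B * C⁻¹)).PosSemidef) :
    ∀ U : Matrix (Fin r) (Fin r) ℝ,
      Uᵀ * U = (1 : Matrix (Fin r) (Fin r) ℝ) -
          C⁻¹ * Bᵀ * Gᵀ * G * B * C⁻¹ →
      (Vg * U + G * B * C⁻¹)ᵀ * (Vg * U + G * B * C⁻¹) = 1 ∧
        Atil * (Vg * U + G * B * C⁻¹) * C - B =
          (Vg * U + G * B * C⁻¹) * (d1 • C) :=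
  stmt18_general Atil hAtil d1 Vg hVg hEig hSpan B C hC G hG1 hG2 hG3 hG4 hdeg
end

section
/- Consider the graph-Laplacian semi-supervised problem: L = [[L_ll, L_lu],[L_ul, L_uu]] symmetric, labels X_l fixed, and constraint set 𝒞 = {X = [X_l; X_u] : 1ᵀX = cᵀ, XᵀX = diag(c)}. Set Z₀ = n⁻¹1ₙ c_uᵀ, P = Iₙ − n⁻¹1ₙ1ₙᵀ, A = P L_uu P, B = P(L_uu Z₀ + L_ul X_l), C = diag(c) − X_lᵀX_l − Z₀ᵀZ₀. Then X = [X_l; X_u] minimizes tr(XᵀLX) over 𝒞 if and only if X_u = Z + Z₀ where Z minimizes tr(ZᵀAZ) + 2 tr(ZᵀB) subject to ZᵀZ = C and 1ₙᵀZ = 0. -/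
open Matrix BigOperators

/-- for the graph-Laplacian semi-supervised problem with fixed labels `X_l`
and constraints `1ᵀX = cᵀ`, `XᵀX = diag(c)`, setting `Z₀ = n⁻¹1ₙc_uᵀ`,
`P = Iₙ − n⁻¹1ₙ1ₙᵀ`, `A = P L_uu P`, `B = P(L_uu Z₀ + L_ul X_l)`,
`C = diag(c) − X_lᵀX_l − Z₀ᵀZ₀`, the matrix `X = [X_l; X_u]` minimizes `tr(XᵀLX)` over the
feasible set iff `X_u = Z + Z₀` where `Z` minimizes `tr(ZᵀAZ) + 2tr(ZᵀB)` subject to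
`ZᵀZ = C` and `1ₙᵀZ = 0`. -/
theorem stmt19 {m n r : ℕ} (hn : 0 < n)
    (Lll : Matrix (Fin m) (Fin m) ℝ) (Llu : Matrix (Fin m) (Fin n) ℝ)
    (Lul : Matrix (Fin n) (Fin m) ℝ) (Luu : Matrix (Fin n) (Fin n) ℝ)
    (hLll : Lll.IsSymm) (hLuu : Luu.IsSymm) (hLlu : Lluᵀ = Lul)
    (Xl : Matrix (Fin m) (Fin r) ℝ) (hXl : ∀ i j, Xl i j = 0 ∨ Xl i j = 1)
    (c : Fin r → ℝ)
    (cu : Fin r → ℝ) (hcu : ∀ j, cu j = c j - ∑ i : Fin m, Xl i j)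
    (Z₀ : Matrix (Fin n) (Fin r) ℝ) (hZ₀ : Z₀ = Matrix.of fun _ j => cu j / n)
    (P : Matrix (Fin n) (Fin n) ℝ)
    (hP : P = 1 - (n : ℝ)⁻¹ • Matrix.of (fun _ _ => (1 : ℝ)))
    (Amat : Matrix (Fin n) (Fin n) ℝ) (hAmat : Amat = P * Luu * P)
    (Bmat : Matrix (Fin n) (Fin r) ℝ) (hBmat : Bmat = P * (Luu * Z₀ + Lul * Xl))
    (Cmat : Matrix (Fin r) (Fin r) ℝ)
    (hCmat : Cmat = Matrix.diagonal c - Xlᵀ * Xl - Z₀ᵀ * Z₀)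
    -- feasibility of the full problem and of the subproblem
    (Feas : Matrix (Fin n) (Fin r) ℝ → Prop)
    (hFeas : Feas = fun Xu =>
      (∀ j, (∑ i : Fin m, Xl i j) + (∑ i : Fin n, Xu i j) = c j) ∧
      (fromRows Xl Xu)ᵀ * fromRows Xl Xu = Matrix.diagonal c)
    (SubFeas : Matrix (Fin n) (Fin r) ℝ → Prop)
    (hSubFeas : SubFeas = fun Z =>
      Zᵀ * Z = Cmat ∧ ∀ j, (∑ i : Fin n, Z i j) = 0)
    -- the two objectives
    (g : Matrix (Fin n) (Fin r) ℝ → ℝ)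
    (hg : g = fun Xu => ((fromRows Xl Xu)ᵀ * (fromBlocks Lll Llu Lul Luu) *
      fromRows Xl Xu).trace)
    (h : Matrix (Fin n) (Fin r) ℝ → ℝ)
    (hh : h = fun Z => (Zᵀ * Amat * Z).trace + 2 * (Zᵀ * Bmat).trace) :
    ∀ Xu : Matrix (Fin n) (Fin r) ℝ, Feas Xu →
      ((∀ Xu', Feas Xu' → g Xu ≤ g Xu') ↔
        (SubFeas (Xu - Z₀) ∧ ∀ Z', SubFeas Z' → h (Xu - Z₀) ≤ h Z')) := by
  have n0 : (n : ℝ) ≠ 0 := Nat.cast_ne_zero.mpr hn.ne'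
  -- column sums of Z₀
  have hZ₀sum : ∀ j, ∑ i : Fin n, Z₀ i j = cu j := by
    intro j
    simp [hZ₀, Finset.sum_div]
    field_simp
  -- P kills nothing on zero-column-sum matrices
  have hPZ : ∀ Z : Matrix (Fin n) (Fin r) ℝ, (∀ j, ∑ i : Fin n, Z i j = 0) →
      P * Z = Z := by
    intro Z hZ
    have hJ : (Matrix.of (fun _ _ => (1 : ℝ)) : Matrix (Fin n) (Fin n) ℝ) * Z = 0 := by
      ext i j
      simp [Matrix.mul_apply, hZ j]
    rw [hP, Matrix.sub_mul, Matrix.one_mul, Matrix.smul_mul, hJ, smul_zero, sub_zero]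
  have hPsymm : Pᵀ = P := by
    rw [hP]
    ext i j
    simp [Matrix.one_apply, eq_comm]
  have hZP : ∀ Z : Matrix (Fin n) (Fin r) ℝ, (∀ j, ∑ i : Fin n, Z i j = 0) →
      Zᵀ * P = Zᵀ := by
    intro Z hZ
    have := congrArg Matrix.transpose (hPZ Z hZ)
    rwa [Matrix.transpose_mul, hPsymm] at this
  -- cross term vanishes
  have hcross : ∀ Z : Matrix (Fin n) (Fin r) ℝ, (∀ j, ∑ i : Fin n, Z i j = 0) →
      Zᵀ * Z₀ = 0 := by
    intro Z hZ
    ext j k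
    simp only [Matrix.mul_apply, Matrix.transpose_apply, hZ₀, Matrix.of_apply,
      Matrix.zero_apply]
    rw [← Finset.sum_mul, hZ j, zero_mul]
  have hcross' : ∀ Z : Matrix (Fin n) (Fin r) ℝ, (∀ j, ∑ i : Fin n, Z i j = 0) →
      Z₀ᵀ * Z = 0 := by
    intro Z hZ
    have := congrArg Matrix.transpose (hcross Z hZ)
    rwa [Matrix.transpose_mul, Matrix.transpose_transpose, Matrix.transpose_zero] at this
  -- column sum equivalence
  have hsumEquiv : ∀ Xu : Matrix (Fin n) (Fin r) ℝ,
      (∀ j, (∑ i : Fin m, Xl i j) + (∑ i : Fin n, Xu i j) = c j) ↔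
      (∀ j, ∑ i : Fin n, (Xu - Z₀) i j = 0) := by
    intro Xu
    have key : ∀ j, ∑ i : Fin n, (Xu - Z₀) i j =
        (∑ i : Fin n, Xu i j) - cu j := by
      intro j
      simp [Matrix.sub_apply, Finset.sum_sub_distrib, hZ₀sum j]
    constructor
    · intro hs j
      rw [key j, hcu j, ← hs j]
      ring
    · intro hs j
      have := hs j
      rw [key j, hcu j] at this
      linarith
  -- feasibility equivalence
  have hfeasEquiv : ∀ Xu : Matrix (Fin n) (Fin r) ℝ, Feas Xu ↔ SubFeas (Xu - Z₀) := by
    intro Xu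
    rw [hFeas, hSubFeas]
    constructor
    · rintro ⟨hs, hgram⟩
      have hs0 := (hsumEquiv Xu).mp hs
      refine ⟨?_, hs0⟩
      have hXu : Xu = (Xu - Z₀) + Z₀ := by abel
      have hrr : (fromRows Xl Xu)ᵀ * fromRows Xl Xu = Xlᵀ * Xl + Xuᵀ * Xu := by
        rw [Matrix.transpose_fromRows, Matrix.fromCols_mul_fromRows]
      rw [hrr] at hgram
      have hXuXu : Xuᵀ * Xu = (Xu - Z₀)ᵀ * (Xu - Z₀) + Z₀ᵀ * Z₀ := by
        nth_rewrite 1 [hXu]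
        nth_rewrite 2 [hXu]
        rw [Matrix.transpose_add, Matrix.add_mul, Matrix.mul_add, Matrix.mul_add,
          hcross _ hs0, hcross' _ hs0]
        abel
      rw [hXuXu] at hgram
      rw [hCmat, ← hgram]
      abel
    · rintro ⟨hgram, hs0⟩
      refine ⟨(hsumEquiv Xu).mpr hs0, ?_⟩
      have hXu : Xu = (Xu - Z₀) + Z₀ := by abel
      have hrr : (fromRows Xl Xu)ᵀ * fromRows Xl Xu = Xlᵀ * Xl + Xuᵀ * Xu := by
        rw [Matrix.transpose_fromRows, Matrix.fromCols_mul_fromRows]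
      have hXuXu : Xuᵀ * Xu = (Xu - Z₀)ᵀ * (Xu - Z₀) + Z₀ᵀ * Z₀ := by
        nth_rewrite 1 [hXu]
        nth_rewrite 2 [hXu]
        rw [Matrix.transpose_add, Matrix.add_mul, Matrix.mul_add, Matrix.mul_add,
          hcross _ hs0, hcross' _ hs0]
        abel
      rw [hrr, hXuXu, hgram, hCmat]
      abel
  -- trace swap lemma
  have tsw : ∀ U V : Matrix (Fin n) (Fin r) ℝ,
      (Uᵀ * Luu * V).trace = (Vᵀ * Luu * U).trace := by
    intro U V
    have : (Uᵀ * Luu * V)ᵀ = Vᵀ * Luu * U := by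
      rw [Matrix.transpose_mul, Matrix.transpose_mul, Matrix.transpose_transpose,
        hLuu.eq, ← Matrix.mul_assoc]
    rw [← Matrix.trace_transpose (Uᵀ * Luu * V), this]
  -- expansion of g
  have gexp : ∀ Xu : Matrix (Fin n) (Fin r) ℝ,
      g Xu = (Xlᵀ * Lll * Xl).trace + 2 * (Xuᵀ * Lul * Xl).trace
        + (Xuᵀ * Luu * Xu).trace := by
    intro Xu
    have tcross : (Xlᵀ * (Llu * Xu)).trace = (Xuᵀ * Lul * Xl).trace := by
      have : (Xlᵀ * (Llu * Xu))ᵀ = Xuᵀ * Lul * Xl := by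
        rw [Matrix.transpose_mul, Matrix.transpose_mul, Matrix.transpose_transpose, hLlu]
      rw [← Matrix.trace_transpose (Xlᵀ * (Llu * Xu)), this]
    rw [hg]
    simp only
    rw [Matrix.transpose_fromRows, Matrix.fromCols_mul_fromBlocks,
      Matrix.fromCols_mul_fromRows]
    simp only [Matrix.add_mul, Matrix.trace_add, Matrix.mul_assoc]
    rw [tcross]
    simp only [← Matrix.mul_assoc]
    ring
  -- expansion of h
  have hexp : ∀ Z : Matrix (Fin n) (Fin r) ℝ, (∀ j, ∑ i : Fin n, Z i j = 0) →
      h Z = (Zᵀ * Luu * Z).trace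
        + 2 * ((Zᵀ * Luu * Z₀).trace + (Zᵀ * Lul * Xl).trace) := by
    intro Z hZ
    have e1 : Zᵀ * Amat * Z = Zᵀ * Luu * Z := by
      rw [hAmat]
      simp only [← Matrix.mul_assoc]
      rw [hZP Z hZ, Matrix.mul_assoc, hPZ Z hZ]
    have e2 : Zᵀ * Bmat = Zᵀ * Luu * Z₀ + Zᵀ * Lul * Xl := by
      rw [hBmat, ← Matrix.mul_assoc, hZP Z hZ, Matrix.mul_add,
        ← Matrix.mul_assoc, ← Matrix.mul_assoc]
    rw [hh]
    simp only
    rw [e1, e2, Matrix.trace_add]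
  -- key objective identity
  set K : ℝ := (Xlᵀ * Lll * Xl).trace + 2 * (Z₀ᵀ * Lul * Xl).trace
    + (Z₀ᵀ * Luu * Z₀).trace with hK
  have keyEq : ∀ Z : Matrix (Fin n) (Fin r) ℝ, (∀ j, ∑ i : Fin n, Z i j = 0) →
      g (Z + Z₀) = h Z + K := by
    intro Z hZ
    rw [gexp (Z + Z₀), hexp Z hZ]
    have e1 : ((Z + Z₀)ᵀ * Lul * Xl).trace
        = (Zᵀ * Lul * Xl).trace + (Z₀ᵀ * Lul * Xl).trace := by
      rw [Matrix.transpose_add, Matrix.add_mul, Matrix.add_mul, Matrix.trace_add]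
    have e2 : ((Z + Z₀)ᵀ * Luu * (Z + Z₀)).trace
        = (Zᵀ * Luu * Z).trace + 2 * (Zᵀ * Luu * Z₀).trace
          + (Z₀ᵀ * Luu * Z₀).trace := by
      rw [Matrix.transpose_add, Matrix.add_mul, Matrix.add_mul, Matrix.mul_add,
        Matrix.mul_add, Matrix.trace_add, Matrix.trace_add, Matrix.trace_add,
        tsw Z₀ Z]
      ring
    rw [e1, e2]
    ring
  -- main argument
  intro Xu hFu
  have hZfeas : SubFeas (Xu - Z₀) := (hfeasEquiv Xu).mp hFu
  have hsum0 : ∀ j, ∑ i : Fin n, (Xu - Z₀) i j = 0 := by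
    rw [hSubFeas] at hZfeas
    exact hZfeas.2
  have eXu : g Xu = h (Xu - Z₀) + K := by
    have := keyEq (Xu - Z₀) hsum0
    rwa [sub_add_cancel] at this
  constructor
  · intro hmin
    refine ⟨hZfeas, ?_⟩
    intro Z' hZ'
    have hZ'sum : ∀ j, ∑ i : Fin n, Z' i j = 0 := by
      rw [hSubFeas] at hZ'
      exact hZ'.2
    have hF' : Feas (Z' + Z₀) := by
      rw [hfeasEquiv]
      rwa [add_sub_cancel_right]
    have hle := hmin _ hF'
    have e2 : g (Z' + Z₀) = h Z' + K := keyEq Z' hZ'sum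
    linarith
  · rintro ⟨_, hmin⟩ Xu' hFu'
    have hZ'feas : SubFeas (Xu' - Z₀) := (hfeasEquiv Xu').mp hFu'
    have hsum0' : ∀ j, ∑ i : Fin n, (Xu' - Z₀) i j = 0 := by
      rw [hSubFeas] at hZ'feas
      exact hZ'feas.2
    have eXu' : g Xu' = h (Xu' - Z₀) + K := by
      have := keyEq (Xu' - Z₀) hsum0'
      rwa [sub_add_cancel] at this
    have hle := hmin _ hZ'feas
    linarith
end
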